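/- arXiv:1409.4781 — 10 statements merged into one kernel-verified Lean document; each statement's English description precedes it below -/
import Mathlib

section
/- Let L be a linear subspace of Sⁿ such that the spectrahedral cone K = L ∩ S₊ⁿ is rank one generated. Let S, B ∈ Sⁿ and let C = {X ∈ K : ⟨B,X⟩ = 1}. If C is nonempty and the infimum of ⟨S,X⟩ over X ∈ C is finite (bounded below), then inf{⟨S,X⟩ : X ∈ C} = inf{⟨S,X⟩ : X ∈ C, rank X = 1}. -/
open Matrix

/-- A set of matrices is rank one generated (ROG) if every element is a finite
sum of rank-1 matrices belonging to the set. -/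
def IsROG {n : ℕ} (K : Set (Matrix (Fin n) (Fin n) ℝ)) : Prop :=
  ∀ X ∈ K, ∃ (N : ℕ) (Y : Fin N → Matrix (Fin n) (Fin n) ℝ),
    (∀ i, Y i ∈ K ∧ (Y i).rank = 1) ∧ X = ∑ i, Y i

lemma psd_smul_aux {n : ℕ} {M : Matrix (Fin n) (Fin n) ℝ} (hM : M.PosSemidef) {c : ℝ}
    (hc : 0 ≤ c) : (c • M).PosSemidef := by
  refine ⟨?_, fun x => ?_⟩
  · unfold Matrix.IsHermitian
    rw [conjTranspose_smul, hM.1]; simp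
  · have := hM.2 x
    exact (hM.smul hc).2 x

lemma rank_smul_aux {n : ℕ} (M : Matrix (Fin n) (Fin n) ℝ) {c : ℝ} (hc : c ≠ 0) :
    (c • M).rank = M.rank := by
  have : c • M = (c • (1 : Matrix (Fin n) (Fin n) ℝ)) * M := by
    rw [smul_mul, one_mul]
  rw [this, rank_mul_eq_right_of_isUnit_det]
  simp [det_smul, hc]

lemma eps_nonneg_aux (A c t₀ : ℝ) (ht₀ : 0 < t₀) (h : ∀ ε, 0 < ε → ε ≤ t₀ → ε * c ≤ A) :
    0 ≤ A := by
  rcases le_or_gt 0 c with hc | hc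
  · exact le_trans (mul_nonneg ht₀.le hc) (h t₀ ht₀ le_rfl)
  · by_contra hA
    push_neg at hA
    have hpos : 0 < A / (2 * c) := div_pos_of_neg_of_neg hA (by linarith)
    set ε := min t₀ (A / (2 * c)) with hε
    have hεpos : 0 < ε := lt_min ht₀ hpos
    have h1 : ε * c ≤ A := h ε hεpos (min_le_left _ _)
    have h2 : ε ≤ A / (2 * c) := min_le_right _ _
    have hcne : c ≠ 0 := ne_of_lt hc
    have h3 : A / 2 ≤ ε * c := by
      have := mul_le_mul_of_nonpos_right h2 hc.le
      calc A / 2 = A / (2 * c) * c := by field_simp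
        _ ≤ ε * c := this
    linarith

theorem stmt_0 {n : ℕ} (L : Submodule ℝ (Matrix (Fin n) (Fin n) ℝ))
    (hLsymm : ∀ X ∈ L, X.IsSymm)
    (K : Set (Matrix (Fin n) (Fin n) ℝ))
    (hK : K = {X | X ∈ L ∧ X.PosSemidef})
    (hROG : IsROG K)
    (S B : Matrix (Fin n) (Fin n) ℝ) (hS : S.IsSymm) (hB : B.IsSymm)
    (C : Set (Matrix (Fin n) (Fin n) ℝ))
    (hC : C = {X ∈ K | (B * X).trace = 1})
    (hne : C.Nonempty)
    (hbdd : BddBelow ((fun X => (S * X).trace) '' C)) :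
    sInf ((fun X => (S * X).trace) '' C) =
      sInf ((fun X => (S * X).trace) '' {X ∈ C | X.rank = 1}) := by
  obtain ⟨m, hm⟩ := hbdd
  have hmC : ∀ Z ∈ C, m ≤ (S * Z).trace := fun Z hZ => hm ⟨Z, hZ, rfl⟩
  -- the key claim
  have key : ∀ X ∈ C, ∃ Y ∈ C, Y.rank = 1 ∧ (S * Y).trace ≤ (S * X).trace := by
    intro X hX
    have hXK : X ∈ K := by rw [hC] at hX; exact hX.1
    have hXB : (B * X).trace = 1 := by rw [hC] at hX; exact hX.2
    have hXL : X ∈ L := by rw [hK] at hXK; exact hXK.1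
    have hXpsd : X.PosSemidef := by rw [hK] at hXK; exact hXK.2
    obtain ⟨N, Y, hY, hsum⟩ := hROG X hXK
    set b : Fin N → ℝ := fun i => (B * Y i).trace with hb
    set s : Fin N → ℝ := fun i => (S * Y i).trace with hs
    set fX := (S * X).trace with hfX
    have hYL : ∀ i, Y i ∈ L := fun i => by
      have := (hY i).1; rw [hK] at this; exact this.1
    have hYpsd : ∀ i, (Y i).PosSemidef := fun i => by
      have := (hY i).1; rw [hK] at this; exact this.2
    have hbsum : ∑ i, b i = 1 := by
      rw [hb]; simp only
      rw [← trace_sum]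
      rw [← Finset.mul_sum, ← hsum, hXB]
    have hssum : ∑ i, s i = fX := by
      rw [hs, hfX]; simp only
      rw [← trace_sum, ← Finset.mul_sum, ← hsum]
    -- membership estimate
    have hmem : ∀ (i : Fin N) (t : ℝ), 0 ≤ t → 0 < 1 + t * b i →
        m * (1 + t * b i) ≤ fX + t * s i := by
      intro i t ht hc
      set c := 1 + t * b i with hcdef
      set Z := c⁻¹ • (X + t • Y i) with hZ
      have hZC : Z ∈ C := by
        rw [hC]
        constructor
        · rw [hK]
          constructor
          · exact Submodule.smul_mem _ _ (Submodule.add_mem _ hXL (Submodule.smul_mem _ _ (hYL i)))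
          · exact psd_smul_aux (hXpsd.add (psd_smul_aux (hYpsd i) ht)) (inv_nonneg.mpr hc.le)
        · show (B * Z).trace = 1
          rw [hZ, mul_smul_comm, trace_smul, mul_add, trace_add, mul_smul_comm, trace_smul,
            hXB]
          simp only [smul_eq_mul]
          field_simp
          rfl
      have := hmC Z hZC
      rw [hZ, mul_smul_comm, trace_smul, mul_add, trace_add, mul_smul_comm, trace_smul] at this
      simp only [smul_eq_mul, ← hfX, ← hs] at this
      rw [show c⁻¹ * (fX + t * s i) = (fX + t * s i) / c by ring, le_div_iff₀ hc] at this
      linarith [this]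
    -- nonpositive coefficients
    have hnonpos : ∀ i, b i ≤ 0 → b i * fX ≤ s i := by
      intro i hbi
      rcases eq_or_lt_of_le hbi with heq | hlt
      · -- b i = 0 : need 0 ≤ s i
        rw [heq, zero_mul]
        by_contra hsi
        push_neg at hsi
        have hmfX : m ≤ fX := hmC X hX
        set t := (fX - m + 1) / (-s i) with htdef
        have ht : 0 ≤ t := div_nonneg (by linarith) (by linarith)
        have := hmem i t ht (by rw [heq]; simp)
        rw [heq] at this
        have hts : t * s i = -(fX - m + 1) := by
          rw [htdef, div_mul_eq_mul_div, div_eq_iff (by linarith : -s i ≠ 0)]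
          ring
        rw [mul_zero, add_zero, mul_one, hts] at this
        linarith
      · -- b i < 0
        have hbne : b i ≠ 0 := ne_of_lt hlt
        set t₀ := -(b i)⁻¹ with ht₀def
        have ht₀ : 0 < t₀ := by
          rw [ht₀def, neg_pos]
          exact inv_lt_zero.mpr hlt
        have hA : 0 ≤ fX + t₀ * s i := by
          apply eps_nonneg_aux _ (s i - m * b i) t₀ ht₀
          intro ε hε hεt₀
          have htnn : 0 ≤ t₀ - ε := by linarith
          have hcval : 1 + (t₀ - ε) * b i = -(ε * b i) := by
            rw [ht₀def]
            field_simp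
            ring
          have hcpos : 0 < 1 + (t₀ - ε) * b i := by
            rw [hcval]
            simpa using mul_pos hε (by linarith : (0:ℝ) < -b i)
          have := hmem i (t₀ - ε) htnn hcpos
          rw [hcval] at this
          nlinarith
        rw [ht₀def] at hA
        have h2 : 0 ≤ (-(b i)) * (fX + -(b i)⁻¹ * s i) :=
          mul_nonneg (by linarith) hA
        have h3 : (-(b i)) * (fX + -(b i)⁻¹ * s i) = -(b i * fX) + s i := by
          field_simp
          ring
        linarith
    -- find a positive-coefficient good index
    have hexists : ∃ i, 0 < b i ∧ s i ≤ b i * fX := by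
      by_contra hcon
      push_neg at hcon
      have hPne : ∃ i, 0 < b i := by
        by_contra hall
        push_neg at hall
        have : ∑ i, b i ≤ 0 := Finset.sum_nonpos (fun i _ => hall i)
        rw [hbsum] at this; linarith
      obtain ⟨j, hj⟩ := hPne
      have hstrict : ∑ i, b i * fX < ∑ i, s i := by
        apply Finset.sum_lt_sum
        · intro i _
          rcases le_or_gt (b i) 0 with h | h
          · exact hnonpos i h
          · exact (hcon i h).le
        · exact ⟨j, Finset.mem_univ j, hcon j hj⟩
      rw [← Finset.sum_mul, hbsum, one_mul, hssum] at hstrict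
      linarith
    obtain ⟨i, hbi, hsi⟩ := hexists
    refine ⟨(b i)⁻¹ • Y i, ?_, ?_, ?_⟩
    · rw [hC]
      constructor
      · rw [hK]
        exact ⟨Submodule.smul_mem _ _ (hYL i), psd_smul_aux (hYpsd i) (inv_nonneg.mpr hbi.le)⟩
      · show (B * ((b i)⁻¹ • Y i)).trace = 1
        rw [mul_smul_comm, trace_smul]
        simp only [smul_eq_mul, ← hb]
        exact inv_mul_cancel₀ (ne_of_gt hbi)
    · rw [rank_smul_aux _ (inv_ne_zero (ne_of_gt hbi))]
      exact (hY i).2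
    · rw [mul_smul_comm, trace_smul]
      simp only [smul_eq_mul, ← hs]
      rw [show (b i)⁻¹ * s i = s i / b i by ring, div_le_iff₀ hbi]
      linarith
  -- assemble
  set f := fun X : Matrix (Fin n) (Fin n) ℝ => (S * X).trace with hf
  obtain ⟨X₀, hX₀⟩ := hne
  obtain ⟨Y₀, hY₀C, hY₀r, _⟩ := key X₀ hX₀
  have hsub : {X ∈ C | X.rank = 1} ⊆ C := Set.sep_subset _ _
  have hne₂ : (f '' {X ∈ C | X.rank = 1}).Nonempty := ⟨f Y₀, ⟨Y₀, ⟨hY₀C, hY₀r⟩, rfl⟩⟩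
  have hbdd₂ : BddBelow (f '' {X ∈ C | X.rank = 1}) :=
    BddBelow.mono (Set.image_mono hsub) ⟨m, hm⟩
  apply le_antisymm
  · exact csInf_le_csInf ⟨m, hm⟩ hne₂ (Set.image_mono hsub)
  · refine le_csInf ⟨f X₀, ⟨X₀, hX₀, rfl⟩⟩ ?_
    rintro a ⟨X, hX, rfl⟩
    obtain ⟨Y, hYC, hYr, hYle⟩ := key X hX
    exact le_trans (csInf_le hbdd₂ ⟨Y, ⟨hYC, hYr⟩, rfl⟩) hYle
end

section
/- Let K = L ∩ S₊ⁿ be a spectrahedral cone and let m = max{rank X : X ∈ K}. Then there exist a linear subspace L' ⊆ S^m and a real n×m matrix A of rank m (full column rank) such that the spectrahedral cone K' = L' ∩ S₊^m contains a positive definite matrix and the map X ↦ A X Aᵀ is a bijection from K' onto K. -/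
open Matrix

noncomputable section StmtAux

/-- The linear map `Y ↦ A * Y * Aᵀ`. -/
def stmtConjMap {n m : ℕ} (A : Matrix (Fin n) (Fin m) ℝ) :
    Matrix (Fin m) (Fin m) ℝ →ₗ[ℝ] Matrix (Fin n) (Fin n) ℝ where
  toFun Y := A * Y * Aᵀ
  map_add' Y Z := by rw [Matrix.mul_add, Matrix.add_mul]
  map_smul' c Y := by
    simp [Matrix.mul_smul, Matrix.smul_mul]

@[simp] lemma stmtConjMap_apply {n m : ℕ} (A : Matrix (Fin n) (Fin m) ℝ)
    (Y : Matrix (Fin m) (Fin m) ℝ) : stmtConjMap A Y = A * Y * Aᵀ := rfl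

/-- Two matrices with the same action on vectors are equal. -/
lemma stmt_eq_of_mulVec_eq {n m : ℕ} {M N : Matrix (Fin n) (Fin m) ℝ}
    (h : ∀ v, M *ᵥ v = N *ᵥ v) : M = N := by
  ext i j
  have := congrFun (h (Pi.single j 1)) i
  simpa using this

end StmtAux

theorem stmt_3 {n : ℕ} (L : Submodule ℝ (Matrix (Fin n) (Fin n) ℝ))
    (K : Set (Matrix (Fin n) (Fin n) ℝ))
    (hK : K = {X | X ∈ L ∧ X.PosSemidef})
    (m : ℕ) (hm : IsGreatest {r | ∃ X ∈ K, X.rank = r} m) :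
    ∃ (L' : Submodule ℝ (Matrix (Fin m) (Fin m) ℝ)) (A : Matrix (Fin n) (Fin m) ℝ),
      A.rank = m ∧
      (∃ X ∈ {X | X ∈ L' ∧ X.PosSemidef}, X.PosDef) ∧
      Set.BijOn (fun X => A * X * Aᵀ) {X | X ∈ L' ∧ X.PosSemidef} K := by
  classical
  obtain ⟨⟨X₀, hX₀K, hX₀rank⟩, hmax⟩ := hm
  subst hK
  obtain ⟨hX₀L, hX₀psd⟩ := hX₀K
  -- Euclidean space setup
  set E := EuclideanSpace ℝ (Fin n) with hE
  let f : E ≃ₗ[ℝ] (Fin n → ℝ) := WithLp.linearEquiv 2 ℝ (Fin n → ℝ)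
  let W : Submodule ℝ E := (LinearMap.ker X₀.mulVecLin).comap (f : E →ₗ[ℝ] (Fin n → ℝ))
  have hmemW : ∀ v : E, v ∈ W ↔ X₀ *ᵥ (f v) = 0 := by
    intro v
    simp [W, LinearMap.mem_ker, Matrix.mulVecLin_apply]
  -- dimension counting
  have hrn : ∀ M : Matrix (Fin n) (Fin n) ℝ,
      M.rank + Module.finrank ℝ (LinearMap.ker M.mulVecLin) = n := by
    intro M
    have := LinearMap.finrank_range_add_finrank_ker M.mulVecLin
    rwa [Module.finrank_fin_fun] at this
  have hWfin : Module.finrank ℝ W = n - m := by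
    have h1 : Module.finrank ℝ W
        = Module.finrank ℝ (LinearMap.ker X₀.mulVecLin) := by
      have h0 : Submodule.map (f : E →ₗ[ℝ] (Fin n → ℝ)) W = LinearMap.ker X₀.mulVecLin :=
        Submodule.map_comap_eq_of_surjective f.surjective _
      rw [← h0]
      exact (f.submoduleMap W).finrank_eq
    have h2 := hrn X₀
    rw [hX₀rank] at h2
    omega
  have hWperp : Module.finrank ℝ (Wᗮ) = m := by
    have h1 := Submodule.finrank_add_finrank_orthogonal W
    have h2 := hrn X₀
    rw [hX₀rank] at h2
    rw [hWfin] at h1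
    have h3 : Module.finrank ℝ E = n := finrank_euclideanSpace_fin
    omega
  -- orthonormal basis of Wᗮ
  let b : OrthonormalBasis (Fin m) ℝ (Wᗮ) :=
    (stdOrthonormalBasis ℝ (Wᗮ)).reindex (finCongr hWperp)
  let u : Fin m → (Fin n → ℝ) := fun j => f ((b j : E))
  let A : Matrix (Fin n) (Fin m) ℝ := Matrix.of fun i j => u j i
  have hinner : ∀ (x y : E), inner ℝ x y = ∑ i, f x i * f y i := by
    intro x y
    simp [PiLp.inner_apply, RCLike.inner_apply, f]
    rw [PiLp.inner_apply]
    refine Finset.sum_congr rfl fun i _ => ?_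
    simp [mul_comm]
    rfl
  -- AᵀA = 1
  have hAtA : Aᵀ * A = (1 : Matrix (Fin m) (Fin m) ℝ) := by
    ext j k
    have horth := b.orthonormal
    rw [orthonormal_iff_ite] at horth
    have h1 : (inner (𝕜 := ℝ) (b j : E) (b k : E)) = if j = k then (1:ℝ) else 0 := by
      rw [← Submodule.coe_inner]
      exact horth j k
    rw [hinner] at h1
    simp only [Matrix.mul_apply, Matrix.transpose_apply, Matrix.one_apply, A, Matrix.of_apply]
    rw [← h1]
  -- A *ᵥ x as a vector in Wᗮ
  have hAmul : ∀ x : Fin m → ℝ, A *ᵥ x = f (∑ j, x j • (b j : E)) := by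
    intro x
    rw [map_sum]
    funext i
    simp only [Matrix.mulVec, dotProduct, A, Matrix.of_apply, Finset.sum_apply]
    refine Finset.sum_congr rfl fun j _ => ?_
    rw [_root_.map_smul]
    simp [u, mul_comm]
  have hAmem : ∀ x : Fin m → ℝ, f.symm (A *ᵥ x) ∈ Wᗮ := by
    intro x
    rw [hAmul, LinearEquiv.symm_apply_apply]
    exact Submodule.sum_mem _ fun j _ => Submodule.smul_mem _ _ (b j).2
  -- A *ᵥ x = 0 → x = 0
  have hAinj : ∀ x : Fin m → ℝ, A *ᵥ x = 0 → x = 0 := by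
    intro x hx
    have : (Aᵀ * A) *ᵥ x = 0 := by
      rw [← Matrix.mulVec_mulVec, hx, Matrix.mulVec_zero]
    rwa [hAtA, Matrix.one_mulVec] at this
  -- the projection property
  have hproj : ∀ v : Fin n → ℝ, f.symm (v - (A * Aᵀ) *ᵥ v) ∈ W := by
    intro v
    have hx : (A * Aᵀ) *ᵥ v = f (∑ j, (Aᵀ *ᵥ v) j • (b j : E)) := by
      rw [← Matrix.mulVec_mulVec, hAmul]
    have hcoef : ∀ j, (Aᵀ *ᵥ v) j = inner (𝕜 := ℝ) (b j : E) (f.symm v) := by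
      intro j
      rw [hinner]
      simp only [Matrix.mulVec, dotProduct, Matrix.transpose_apply, A, Matrix.of_apply]
      rw [LinearEquiv.apply_symm_apply]
    have hxproj : (A * Aᵀ) *ᵥ v
        = f (((Wᗮ).orthogonalProjectionOnto (f.symm v) : E)) := by
      rw [hx]
      congr 1
      rw [OrthonormalBasis.orthogonalProjectionOnto_apply_eq_sum b (f.symm v)]
      push_cast
      exact Finset.sum_congr rfl fun j _ => by rw [hcoef]
    have hmem2 : f.symm v - ((Wᗮ).orthogonalProjectionOnto (f.symm v) : E) ∈ Wᗮᗮ :=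
      Submodule.sub_starProjection_mem_orthogonal (K := Wᗮ) (f.symm v)
    rw [Submodule.orthogonal_orthogonal] at hmem2
    have : f.symm (v - (A * Aᵀ) *ᵥ v)
        = f.symm v - ((Wᗮ).orthogonalProjectionOnto (f.symm v) : E) := by
      rw [map_sub, hxproj, LinearEquiv.symm_apply_apply]
    rwa [this]
  -- kernel inclusion for all X ∈ K
  have hker : ∀ X : Matrix (Fin n) (Fin n) ℝ, X ∈ L → X.PosSemidef →
      ∀ v : Fin n → ℝ, X₀ *ᵥ v = 0 → X *ᵥ v = 0 := by
    intro X hXL hXpsd v hv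
    have hsum_mem : X + X₀ ∈ {X | X ∈ L ∧ X.PosSemidef} :=
      ⟨L.add_mem hXL hX₀L, hXpsd.add hX₀psd⟩
    have hr : (X + X₀).rank ≤ m := hmax ⟨X + X₀, hsum_mem, rfl⟩
    have hkerle : LinearMap.ker (X + X₀).mulVecLin ≤ LinearMap.ker X₀.mulVecLin := by
      intro w hw
      rw [LinearMap.mem_ker, Matrix.mulVecLin_apply] at hw ⊢
      have h1 : star w ⬝ᵥ ((X + X₀) *ᵥ w) = 0 := by rw [hw, dotProduct_zero]
      rw [Matrix.add_mulVec, dotProduct_add] at h1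
      have h2 := hXpsd.dotProduct_mulVec_nonneg w
      have h3 := hX₀psd.dotProduct_mulVec_nonneg w
      have h0 : star w ⬝ᵥ (X₀ *ᵥ w) = 0 := by linarith
      exact (hX₀psd.dotProduct_mulVec_zero_iff w).mp h0
    have heq : LinearMap.ker (X + X₀).mulVecLin = LinearMap.ker X₀.mulVecLin := by
      apply Submodule.eq_of_le_of_finrank_le hkerle
      have h1 := hrn (X + X₀)
      have h2 := hrn X₀
      rw [hX₀rank] at h2
      omega
    have hvker : v ∈ LinearMap.ker (X + X₀).mulVecLin := by
      rw [heq, LinearMap.mem_ker, Matrix.mulVecLin_apply]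
      exact hv
    rw [LinearMap.mem_ker, Matrix.mulVecLin_apply, Matrix.add_mulVec, hv] at hvker
    simpa using hvker
  -- fixing lemma: conjugation by A Aᵀ fixes X
  have hfix : ∀ X : Matrix (Fin n) (Fin n) ℝ, Xᵀ = X →
      (∀ v : Fin n → ℝ, X₀ *ᵥ v = 0 → X *ᵥ v = 0) →
      A * (Aᵀ * X * A) * Aᵀ = X := by
    intro X hXsym hXker
    have hstep : X * (A * Aᵀ) = X := by
      apply stmt_eq_of_mulVec_eq
      intro v
      rw [← Matrix.mulVec_mulVec]
      have hzero : X *ᵥ (v - (A * Aᵀ) *ᵥ v) = 0 := by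
        apply hXker
        have := hproj v
        rw [hmemW] at this
        rwa [LinearEquiv.apply_symm_apply] at this
      rw [Matrix.mulVec_sub] at hzero
      have := sub_eq_zero.mp hzero
      exact this.symm
    have hstep2 : (A * Aᵀ) * X = X := by
      have := congrArg Matrix.transpose hstep
      rwa [Matrix.transpose_mul, Matrix.transpose_mul, Matrix.transpose_transpose,
        hXsym] at this
    calc A * (Aᵀ * X * A) * Aᵀ = (A * Aᵀ) * (X * (A * Aᵀ)) := by
          simp only [Matrix.mul_assoc]
      _ = X := by rw [hstep, hstep2]
  -- symmetry of elements
  have hsymm : ∀ X : Matrix (Fin n) (Fin n) ℝ, X.PosSemidef → Xᵀ = X := by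
    intro X hX
    have := hX.1
    rwa [Matrix.IsHermitian, Matrix.conjTranspose_eq_transpose_of_trivial] at this
  -- conjugation preserves PSD, real version
  have hconj : ∀ Y : Matrix (Fin m) (Fin m) ℝ, Y.PosSemidef → (A * Y * Aᵀ).PosSemidef := by
    intro Y hY
    have := hY.mul_mul_conjTranspose_same A
    rwa [Matrix.conjTranspose_eq_transpose_of_trivial] at this
  have hconj' : ∀ X : Matrix (Fin n) (Fin n) ℝ, X.PosSemidef → (Aᵀ * X * A).PosSemidef := by
    intro X hX
    have := hX.conjTranspose_mul_mul_same A
    rwa [Matrix.conjTranspose_eq_transpose_of_trivial] at this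
  -- cancellation
  have hcancel : ∀ Y : Matrix (Fin m) (Fin m) ℝ, Aᵀ * (A * Y * Aᵀ) * A = Y := by
    intro Y
    calc Aᵀ * (A * Y * Aᵀ) * A = (Aᵀ * A) * Y * (Aᵀ * A) := by
          simp only [Matrix.mul_assoc]
      _ = Y := by rw [hAtA, Matrix.one_mul, Matrix.mul_one]
  -- the subspace
  refine ⟨L.comap (stmtConjMap A), A, ?_, ?_, ?_, ?_, ?_⟩
  · -- rank A = m
    have h1 : (Aᵀ * A).rank = m := by
      rw [hAtA]
      simp [Matrix.rank_one]
    refine le_antisymm (A.rank_le_card_width.trans_eq (Fintype.card_fin m)) ?_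
    calc m = (Aᵀ * A).rank := h1.symm
      _ ≤ A.rank := Matrix.rank_mul_le_right Aᵀ A
  · -- positive definite element
    refine ⟨Aᵀ * X₀ * A, ⟨?_, hconj' X₀ hX₀psd⟩, ?_⟩
    · rw [Submodule.mem_comap, stmtConjMap_apply]
      rw [hfix X₀ (hsymm X₀ hX₀psd) (fun v hv => hv)]
      exact hX₀L
    · refine posDef_iff_dotProduct_mulVec.mpr ⟨(hconj' X₀ hX₀psd).1, fun x hx => ?_⟩
      have hkey : star x ⬝ᵥ ((Aᵀ * X₀ * A) *ᵥ x) = star (A *ᵥ x) ⬝ᵥ (X₀ *ᵥ (A *ᵥ x)) := by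
        simp only [star_trivial]
        rw [← Matrix.mulVec_mulVec, ← Matrix.mulVec_mulVec, Matrix.dotProduct_mulVec,
          Matrix.vecMul_transpose]
      rcases lt_or_eq_of_le (hX₀psd.dotProduct_mulVec_nonneg (A *ᵥ x)) with h | h
      · rwa [hkey]
      · exfalso
        have h0 : X₀ *ᵥ (A *ᵥ x) = 0 := (hX₀psd.dotProduct_mulVec_zero_iff _).mp h.symm
        have hmW : f.symm (A *ᵥ x) ∈ W := by
          rw [hmemW, LinearEquiv.apply_symm_apply]
          exact h0
        have hmWp := hAmem x
        have hz : f.symm (A *ᵥ x) = 0 := by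
          have hi := (Submodule.mem_orthogonal _ _).mp hmWp _ hmW
          exact inner_self_eq_zero.mp hi
        have hz2 : A *ᵥ x = 0 := by
          have := (LinearEquiv.map_eq_zero_iff f.symm).mp hz
          exact this
        exact hx (hAinj x hz2)
  · -- MapsTo
    rintro Y ⟨hYL', hYpsd⟩
    exact ⟨Submodule.mem_comap.mp hYL', hconj Y hYpsd⟩
  · -- InjOn
    rintro Y₁ _ Y₂ _ h
    have := congrArg (fun M => Aᵀ * M * A) h
    simpa only [hcancel] using this
  · -- SurjOn
    rintro X ⟨hXL, hXpsd⟩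
    refine ⟨Aᵀ * X * A, ⟨?_, hconj' X hXpsd⟩, ?_⟩
    · rw [Submodule.mem_comap, stmtConjMap_apply,
        hfix X (hsymm X hXpsd) (hker X hXL hXpsd)]
      exact hXL
    · simp only
      rw [hfix X (hsymm X hXpsd) (hker X hXL hXpsd)]
end

section
/- Let K = L ∩ S₊ⁿ be a rank one generated spectrahedral cone. Then a nonzero matrix X ∈ K generates an extreme ray of K if and only if rank X = 1. -/
open Matrix

lemma rank_smul' {n : ℕ} (A : Matrix (Fin n) (Fin n) ℝ) {c : ℝ} (hc : c ≠ 0) :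
    (c • A).rank = A.rank := by
  rw [smul_eq_diagonal_mul, rank_mul_eq_right_of_isUnit_det]
  simp only [det_diagonal, Finset.prod_const]
  exact isUnit_iff_ne_zero.mpr (pow_ne_zero _ hc)

lemma psd_col_zero {n : ℕ} {W : Matrix (Fin n) (Fin n) ℝ} (hW : W.PosSemidef)
    {j : Fin n} (h : W j j = 0) (i : Fin n) : W i j = 0 := by
  have h0 : star (Pi.single j 1 : Fin n → ℝ) ⬝ᵥ W *ᵥ Pi.single j 1 = 0 := by
    simp [mulVec_single, dotProduct_single, h]
  have := (hW.dotProduct_mulVec_zero_iff (Pi.single j 1)).mp h0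
  have := congrFun this i
  simpa [mulVec_single] using this

lemma psd_diag_nonneg {n : ℕ} {W : Matrix (Fin n) (Fin n) ℝ} (hW : W.PosSemidef)
    (j : Fin n) : 0 ≤ W j j := by
  have := hW.dotProduct_mulVec_nonneg (Pi.single j 1)
  simpa [mulVec_single_one, dotProduct_single] using this

theorem stmt_4 {n : ℕ} (L : Submodule ℝ (Matrix (Fin n) (Fin n) ℝ))
    (K : Set (Matrix (Fin n) (Fin n) ℝ))
    (hK : K = {X | X ∈ L ∧ X.PosSemidef})
    (hROG : IsROG K)
    (X : Matrix (Fin n) (Fin n) ℝ) (hX : X ∈ K) (hX0 : X ≠ 0) :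
    (∀ Y Z, Y ∈ K → Z ∈ K → X = Y + Z →
        (∃ a : ℝ, 0 ≤ a ∧ Y = a • X) ∧ (∃ b : ℝ, 0 ≤ b ∧ Z = b • X)) ↔
      X.rank = 1 := by
  subst hK
  obtain ⟨hXL, hXpsd⟩ := hX
  constructor
  · -- extreme → rank one
    intro hExt
    obtain ⟨N, Y, hY, hsum⟩ := hROG X ⟨hXL, hXpsd⟩
    have hN : N ≠ 0 := by
      rintro rfl
      simp only [Finset.univ_eq_empty, Finset.sum_empty] at hsum
      exact hX0 hsum
    have i0 : Fin N := ⟨0, Nat.pos_of_ne_zero hN⟩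
    set Z := ∑ i ∈ Finset.univ.erase i0, Y i with hZdef
    have hYZ : X = Y i0 + Z := by
      rw [hsum, ← Finset.add_sum_erase _ _ (Finset.mem_univ i0)]
    have hZK : Z ∈ {X | X ∈ L ∧ X.PosSemidef} := by
      refine ⟨Submodule.sum_mem _ fun i _ => (hY i).1.1, ?_⟩
      exact Finset.sum_induction _ _ (fun a b ha hb => ha.add hb)
        Matrix.PosSemidef.zero (fun i _ => (hY i).1.2)
    obtain ⟨⟨a, ha, hYa⟩, -⟩ := hExt (Y i0) Z (hY i0).1 hZK hYZ
    have ha0 : a ≠ 0 := by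
      rintro rfl
      rw [zero_smul] at hYa
      have := (hY i0).2
      rw [hYa, rank_zero] at this
      exact one_ne_zero this.symm
    have hXa : X = a⁻¹ • Y i0 := by
      rw [hYa, smul_smul, inv_mul_cancel₀ ha0, one_smul]
    rw [hXa, rank_smul' _ (inv_ne_zero ha0)]
    exact (hY i0).2
  · -- rank one → extreme
    intro hr Y Z hYK hZK hsum
    have hYpsd := hYK.2
    have hZpsd := hZK.2
    -- symmetry facts
    have hXs : ∀ i j, X i j = X j i := fun i j => by
      simpa using hXpsd.1.apply j i
    have hYs : ∀ i j, Y i j = Y j i := fun i j => by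
      simpa using hYpsd.1.apply j i
    -- minors vanish
    have hminor : ∀ i j k l, X i k * X j l = X i l * X j k := by
      rw [rank_eq_finrank_span_cols] at hr
      obtain ⟨v, hv0, hvspan⟩ := finrank_eq_one_iff'.mp hr
      have hc : ∀ k, ∃ c : ℝ, ∀ i, c * (v : Fin n → ℝ) i = X i k := by
        intro k
        obtain ⟨c, hc⟩ := hvspan ⟨Xᵀ k, Submodule.subset_span ⟨k, rfl⟩⟩
        exact ⟨c, fun i => congrFun (congrArg Subtype.val hc) i⟩
      intro i j k l
      obtain ⟨ck, hck⟩ := hc k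
      obtain ⟨cl, hcl⟩ := hc l
      rw [← hck i, ← hcl j, ← hcl i, ← hck j]
      ring
    -- a diagonal entry of X is nonzero
    have hjex : ∃ j, X j j ≠ 0 := by
      by_contra h
      push_neg at h
      exact hX0 (Matrix.ext fun i j => psd_col_zero hXpsd (h j) i)
    obtain ⟨j, hjj⟩ := hjex
    have hjpos : 0 < X j j := lt_of_le_of_ne (psd_diag_nonneg hXpsd j) (Ne.symm hjj)
    -- kernel fact : the test vectors kill X, hence kill Y
    have hYker : ∀ i l, X j j * Y l i = X i j * Y l j := by
      intro i l
      set u : Fin n → ℝ := X j j • (Pi.single i 1 : Fin n → ℝ) - X i j • (Pi.single j 1 : Fin n → ℝ) with hu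
      have hXu : X *ᵥ u = 0 := by
        funext m
        simp only [hu, mulVec_sub, mulVec_smul, mulVec_single_one, col_apply, Pi.sub_apply, Pi.smul_apply,
          smul_eq_mul, Pi.zero_apply, mul_one]
        have h1 := hminor m j i j
        rw [hXs j i] at h1
        linear_combination h1
      have hq : star u ⬝ᵥ Y *ᵥ u + star u ⬝ᵥ Z *ᵥ u = 0 := by
        have : star u ⬝ᵥ X *ᵥ u = 0 := by rw [hXu, dotProduct_zero]
        rw [← this, hsum, add_mulVec, dotProduct_add]
      have hY0 : star u ⬝ᵥ Y *ᵥ u = 0 :=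
        le_antisymm (by linarith [hYpsd.dotProduct_mulVec_nonneg u, hZpsd.dotProduct_mulVec_nonneg u]) (hYpsd.dotProduct_mulVec_nonneg u)
      have hYu : Y *ᵥ u = 0 := (hYpsd.dotProduct_mulVec_zero_iff u).mp hY0
      have := congrFun hYu l
      simp only [hu, mulVec_sub, mulVec_smul, mulVec_single_one, col_apply, Pi.sub_apply, Pi.smul_apply,
        smul_eq_mul, Pi.zero_apply, mul_one] at this
      linarith
    -- conclude Y = a • X
    set a : ℝ := Y j j / X j j with hadef
    have ha : 0 ≤ a := div_nonneg (psd_diag_nonneg hYpsd j) hjpos.le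
    have hYeq : Y = a • X := by
      ext l i
      have e1 : X j j * Y l i = X i j * Y l j := hYker i l
      have e2 : X j j * Y j l = X l j * Y j j := hYker l j
      have e3 : Y l j = Y j l := hYs l j
      have e4 : X l i * X j j = X l j * X i j := by
        have := hminor l j i j
        rw [hXs j i] at this
        exact this
      have key : X j j * Y l i = X l i * Y j j := by
        have h5 : X j j * (X j j * Y l i) = X l i * X j j * Y j j := by
          calc X j j * (X j j * Y l i) = X i j * (X j j * Y j l) := by rw [e1, e3]; ring
            _ = X i j * (X l j * Y j j) := by rw [e2]
            _ = X l i * X j j * Y j j := by rw [e4]; ring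
        have := mul_left_cancel₀ hjj (by linarith : X j j * (X j j * Y l i) = X j j * (X l i * Y j j))
        exact this
      simp only [Matrix.smul_apply, smul_eq_mul, hadef]
      field_simp
      linarith [key]
    refine ⟨⟨a, ha, hYeq⟩, ⟨1 - a, ?_, ?_⟩⟩
    · -- 1 - a ≥ 0 via Z j j ≥ 0
      have hZjj : 0 ≤ Z j j := psd_diag_nonneg hZpsd j
      have : Z j j = (1 - a) * X j j := by
        have := congrFun (congrFun hsum j) j
        simp only [Matrix.add_apply] at this
        have hYjj : Y j j = a * X j j := by
          rw [hYeq]; simp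
        nlinarith
      nlinarith
    · have : Z = X - Y := by rw [hsum]; abel
      rw [this, hYeq, sub_smul, one_smul]
end

section
/- Let K = L ∩ S₊ⁿ be a rank one generated spectrahedral cone and let F ⊆ K be a face of K, i.e., a convex subset such that whenever Y, Z ∈ K and (Y+Z)/2 ∈ F, then Y ∈ F and Z ∈ F. Then F is rank one generated: every matrix in F is a finite sum of rank-1 matrices belonging to F. -/
open Matrix

theorem stmt_5 {n : ℕ} (L : Submodule ℝ (Matrix (Fin n) (Fin n) ℝ))
    (K : Set (Matrix (Fin n) (Fin n) ℝ))
    (hK : K = {X | X ∈ L ∧ X.PosSemidef})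
    (hROG : IsROG K)
    (F : Set (Matrix (Fin n) (Fin n) ℝ))
    (hFK : F ⊆ K) (hFconv : Convex ℝ F)
    (hFace : ∀ Y Z, Y ∈ K → Z ∈ K → (2⁻¹ : ℝ) • (Y + Z) ∈ F → Y ∈ F ∧ Z ∈ F) :
    IsROG F := by
  subst hK
  have hKadd : ∀ A B : Matrix (Fin n) (Fin n) ℝ,
      A ∈ {X | X ∈ L ∧ X.PosSemidef} → B ∈ {X | X ∈ L ∧ X.PosSemidef} →
      A + B ∈ {X | X ∈ L ∧ X.PosSemidef} := by
    rintro A B ⟨hA1, hA2⟩ ⟨hB1, hB2⟩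
    exact ⟨L.add_mem hA1 hB1, hA2.add hB2⟩
  have hKsmul : ∀ (c : ℝ), 0 ≤ c → ∀ A : Matrix (Fin n) (Fin n) ℝ,
      A ∈ {X | X ∈ L ∧ X.PosSemidef} → c • A ∈ {X | X ∈ L ∧ X.PosSemidef} := by
    rintro c hc A ⟨hA1, hA2⟩
    have herm : (c • A).IsHermitian := by
      show (c • A)ᴴ = c • A
      rw [conjTranspose_smul, hA2.1.eq]
      simp
    refine ⟨L.smul_mem c hA1, herm, fun x => ?_⟩
    exact (hA2.smul hc).2 x
  have h0 : (0 : Matrix (Fin n) (Fin n) ℝ) ∈ {X | X ∈ L ∧ X.PosSemidef} :=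
    ⟨L.zero_mem, Matrix.PosSemidef.zero⟩
  have hsplit : ∀ A B : Matrix (Fin n) (Fin n) ℝ,
      A ∈ {X | X ∈ L ∧ X.PosSemidef} → B ∈ {X | X ∈ L ∧ X.PosSemidef} →
      A + B ∈ F → A ∈ F ∧ B ∈ F := by
    intro A B hA hB hAB
    have h2A := hKsmul 2 (by norm_num) A hA
    have h2B := hKsmul 2 (by norm_num) B hB
    have havg : (2⁻¹ : ℝ) • ((2:ℝ) • A + (2:ℝ) • B) ∈ F := by
      rw [smul_add, smul_smul, smul_smul]
      norm_num
      exact hAB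
    obtain ⟨h2A', h2B'⟩ := hFace _ _ h2A h2B havg
    have half : ∀ C : Matrix (Fin n) (Fin n) ℝ,
        C ∈ {X | X ∈ L ∧ X.PosSemidef} → (2:ℝ) • C ∈ F → C ∈ F := by
      intro C hC h2C
      have h3C := hKsmul 3 (by norm_num) C hC
      have : (2⁻¹ : ℝ) • (C + (3:ℝ) • C) ∈ F := by
        have : C + (3:ℝ) • C = (4:ℝ) • C := by
          rw [show (4:ℝ) = 1 + 3 by norm_num, add_smul, one_smul]
        rw [this, smul_smul]
        norm_num
        exact h2C
      exact (hFace C _ hC h3C this).1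
    exact ⟨half A hA h2A', half B hB h2B'⟩
  intro X hX
  obtain ⟨N, Y, hY, hsum⟩ := hROG X (hFK hX)
  refine ⟨N, Y, fun i => ⟨?_, (hY i).2⟩, hsum⟩
  have hKsum : ∀ s : Finset (Fin N), (∑ j ∈ s, Y j) ∈ {X | X ∈ L ∧ X.PosSemidef} := by
    intro s
    induction s using Finset.induction with
    | empty => simpa using h0
    | insert _ _ hns ih =>
      rw [Finset.sum_insert hns]
      exact hKadd _ _ ((hY _).1) ih
  have key : ∀ s : Finset (Fin N), (∑ j ∈ s, Y j) ∈ F → ∀ i ∈ s, Y i ∈ F := by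
    intro s
    induction s using Finset.induction with
    | empty => intro _ i hi; simp at hi
    | @insert a t hns ih =>
      intro hs i hi
      rw [Finset.sum_insert hns] at hs
      obtain ⟨ha, ht⟩ := hsplit _ _ ((hY a).1) (hKsum t) hs
      rcases Finset.mem_insert.mp hi with h | h
      · exact h ▸ ha
      · exact ih ht i h
  exact key Finset.univ (by rw [← hsum]; exact hX) i (Finset.mem_univ i)
end

section
/- Let K = L ∩ S₊ⁿ be a rank one generated spectrahedral cone and let X ∈ K have rank k ≥ 1. Then there exist linearly independent vectors x₁,…,x_k ∈ ℝⁿ such that x_i x_iᵀ ∈ K for all i = 1,…,k and X = Σ_{i=1}^k x_i x_iᵀ. -/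
open Matrix

section helpers

variable {n : ℕ}

lemma mulVec_vecMulVec_self (y v : Fin n → ℝ) :
    vecMulVec y y *ᵥ v = (y ⬝ᵥ v) • y := by
  funext i
  simp only [mulVec, vecMulVec_apply, dotProduct, Pi.smul_apply, smul_eq_mul,
    Finset.sum_mul, Finset.mul_sum]
  ring_nf

lemma quad_vecMulVec (y v : Fin n → ℝ) :
    v ⬝ᵥ (vecMulVec y y *ᵥ v) = (y ⬝ᵥ v) ^ 2 := by
  rw [mulVec_vecMulVec_self, dotProduct_smul, smul_eq_mul, dotProduct_comm]
  ring

lemma isHermitian_vecMulVec (y : Fin n → ℝ) : (vecMulVec y y).IsHermitian := by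
  ext i j
  simp [vecMulVec_apply, mul_comm]

lemma posSemidef_vecMulVec (y : Fin n → ℝ) : (vecMulVec y y).PosSemidef := by
  refine .of_dotProduct_mulVec_nonneg (isHermitian_vecMulVec y) fun v => ?_
  simpa [quad_vecMulVec] using sq_nonneg (y ⬝ᵥ v)


lemma psd_diag_nonneg_s7 {A : Matrix (Fin n) (Fin n) ℝ} (hA : A.PosSemidef) (i : Fin n) :
    0 ≤ A i i := by
  have := hA.dotProduct_mulVec_nonneg (Pi.single i 1)
  simpa [mulVec_single, single_dotProduct] using this

lemma psd_symm_entry {A : Matrix (Fin n) (Fin n) ℝ} (hA : A.IsHermitian) (i j : Fin n) :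
    A j i = A i j := by
  calc A j i = Aᴴ i j := by simp [conjTranspose_apply]
  _ = A i j := by rw [hA]

lemma psd_exists_pos_diag {A : Matrix (Fin n) (Fin n) ℝ} (hA : A.PosSemidef) (hA0 : A ≠ 0) :
    ∃ i, 0 < A i i := by
  by_contra h
  push_neg at h
  have hdiag : ∀ i, A i i = 0 := fun i => le_antisymm (h i) (psd_diag_nonneg_s7 hA i)
  apply hA0
  ext i j
  have key := hA.dotProduct_mulVec_nonneg (Pi.single i 1 + Pi.single j (-A i j))
  rw [show (0 : Matrix (Fin n) (Fin n) ℝ) i j = 0 from rfl]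
  simp only [star_trivial, mulVec_add, mulVec_single, dotProduct_add, add_dotProduct,
    single_dotProduct, mul_one, Pi.smul_apply, op_smul_eq_mul, col_apply] at key
  rw [hdiag i, hdiag j, psd_symm_entry hA.1 i j] at key
  nlinarith [key]

lemma psd_rank_le_one_decomp {A : Matrix (Fin n) (Fin n) ℝ} (hA : A.PosSemidef)
    (h1 : A.rank ≤ 1) : ∃ y : Fin n → ℝ, A = vecMulVec y y := by
  rcases eq_or_ne A 0 with rfl | hA0
  · exact ⟨0, by ext i j; simp [vecMulVec_apply]⟩
  obtain ⟨i, hi⟩ := psd_exists_pos_diag hA hA0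
  set u : Fin n → ℝ := Aᵀ i with hu
  have hu0 : u ≠ 0 := by
    intro h
    have : u i = 0 := by rw [h]; rfl
    simp [hu, transpose_apply] at this
    exact hi.ne' this
  have hWV : Submodule.span ℝ {u} ≤ LinearMap.range A.mulVecLin := by
    rw [Matrix.range_mulVecLin]
    exact Submodule.span_mono (Set.singleton_subset_iff.mpr ⟨i, rfl⟩)
  have hfr : Module.finrank ℝ (Submodule.span ℝ ({u} : Set (Fin n → ℝ))) = 1 :=
    finrank_span_singleton hu0
  have heq : Submodule.span ℝ ({u} : Set (Fin n → ℝ)) = LinearMap.range A.mulVecLin := by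
    apply Submodule.eq_of_le_of_finrank_le hWV
    rw [hfr]
    exact h1
  have hcol : ∀ k, ∃ c : ℝ, c • u = Aᵀ k := by
    intro k
    have : Aᵀ k ∈ LinearMap.range A.mulVecLin := by
      rw [Matrix.range_mulVecLin]
      exact Submodule.subset_span ⟨k, rfl⟩
    rw [← heq] at this
    exact Submodule.mem_span_singleton.mp this
  refine ⟨fun j => A j i / Real.sqrt (A i i), ?_⟩
  ext j k
  obtain ⟨c, hc⟩ := hcol k
  have hjk : A j k = c * A j i := by
    have := congrFun hc j
    simp [transpose_apply, hu] at this
    linarith [this]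
  have hik : A i k = c * A i i := by
    have := congrFun hc i
    simp [transpose_apply, hu] at this
    linarith [this]
  have hsq : Real.sqrt (A i i) * Real.sqrt (A i i) = A i i :=
    Real.mul_self_sqrt hi.le
  have hki : A k i = A i k := psd_symm_entry hA.1 i k
  rw [vecMulVec_apply]
  field_simp
  rw [hjk, hki, hik]
  linear_combination (c * A j i) * hsq


lemma herm_transpose_eq {A : Matrix (Fin n) (Fin n) ℝ} (hA : A.IsHermitian) : Aᵀ = A := by
  ext i j
  simpa using hA.apply i j

lemma symm_dot {A : Matrix (Fin n) (Fin n) ℝ} (hA : A.IsHermitian) (u v : Fin n → ℝ) :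
    (A *ᵥ u) ⬝ᵥ v = u ⬝ᵥ (A *ᵥ v) := by
  rw [dotProduct_comm, dotProduct_mulVec, ← mulVec_transpose, herm_transpose_eq hA,
    dotProduct_comm]

lemma mem_range_of_symm {A : Matrix (Fin n) (Fin n) ℝ} (hA : A.IsHermitian)
    {y : Fin n → ℝ} (hy : ∀ v, A *ᵥ v = 0 → y ⬝ᵥ v = 0) :
    ∃ w, A *ᵥ w = y := by
  let E := EuclideanSpace ℝ (Fin n)
  let R : Submodule ℝ E :=
    (LinearMap.range A.mulVecLin).map (WithLp.linearEquiv 2 ℝ (Fin n → ℝ)).symm.toLinearMap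
  have hinner : ∀ a b : E, inner ℝ a b = dotProduct (WithLp.ofLp a) (WithLp.ofLp b) := by
    intro a b
    exact (EuclideanSpace.inner_eq_star_dotProduct a b).trans (dotProduct_comm _ _)
  have hy2 : WithLp.toLp 2 y ∈ Rᗮᗮ := by
    rw [Submodule.mem_orthogonal]
    intro v hv
    have hAv : A *ᵥ (WithLp.ofLp v) = 0 := by
      have h1 : ∀ w : Fin n → ℝ, (A *ᵥ w) ⬝ᵥ WithLp.ofLp v = 0 := by
        intro w
        have := (Submodule.mem_orthogonal R v).mp hv
          (WithLp.toLp 2 (A.mulVecLin w)) ⟨A.mulVecLin w, ⟨w, rfl⟩, rfl⟩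
        rwa [hinner] at this
      have h2 : (A *ᵥ WithLp.ofLp v) ⬝ᵥ (A *ᵥ WithLp.ofLp v) = 0 := by
        rw [← symm_dot hA]
        exact h1 _
      exact dotProduct_self_eq_zero.mp h2
    rw [hinner]
    rw [dotProduct_comm]
    exact hy _ hAv
  rw [Submodule.orthogonal_orthogonal] at hy2
  obtain ⟨_, ⟨w, rfl⟩, hw⟩ := hy2
  exact ⟨w, by simpa using congrArg WithLp.ofLp hw⟩


lemma quad_sub_smul (X : Matrix (Fin n) (Fin n) ℝ) (d : ℝ) (y v : Fin n → ℝ) :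
    v ⬝ᵥ ((X - d • vecMulVec y y) *ᵥ v) = v ⬝ᵥ (X *ᵥ v) - d * (y ⬝ᵥ v) ^ 2 := by
  rw [sub_mulVec, dotProduct_sub, smul_mulVec, dotProduct_smul, smul_eq_mul]
  rw [quad_vecMulVec]

lemma dot_mulVec_sum {ι : Type*} [DecidableEq ι] (v : Fin n → ℝ) (s : Finset ι)
    (M : ι → Matrix (Fin n) (Fin n) ℝ) :
    v ⬝ᵥ ((∑ i ∈ s, M i) *ᵥ v) = ∑ i ∈ s, v ⬝ᵥ (M i *ᵥ v) := by
  induction s using Finset.induction_on with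
  | empty => simp
  | insert _ _ h ih => rw [Finset.sum_insert h, Finset.sum_insert h, add_mulVec, dotProduct_add, ih]

lemma posSemidef_sum {ι : Type*} [DecidableEq ι] (s : Finset ι)
    (M : ι → Matrix (Fin n) (Fin n) ℝ)
    (h : ∀ i ∈ s, (M i).PosSemidef) : (∑ i ∈ s, M i).PosSemidef := by
  induction s using Finset.induction_on with
  | empty => simpa using Matrix.PosSemidef.zero
  | insert _ _ hx ih =>
      rw [Finset.sum_insert hx]
      exact (h _ (Finset.mem_insert_self _ _)).add
        (ih fun i hi => h i (Finset.mem_insert_of_mem hi))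

lemma psd_cauchy {A : Matrix (Fin n) (Fin n) ℝ} (hA : A.PosSemidef) (w v : Fin n → ℝ) :
    ((A *ᵥ w) ⬝ᵥ v) ^ 2 ≤ (w ⬝ᵥ (A *ᵥ w)) * (v ⬝ᵥ (A *ᵥ v)) := by
  have key : ∀ t : ℝ, 0 ≤ (w ⬝ᵥ (A *ᵥ w)) * (t * t) + (2 * ((A *ᵥ w) ⬝ᵥ v)) * t
      + (v ⬝ᵥ (A *ᵥ v)) := by
    intro t
    have h := hA.dotProduct_mulVec_nonneg (v + t • w)
    simp only [star_trivial, mulVec_add, mulVec_smul, dotProduct_add, add_dotProduct,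
      dotProduct_smul, smul_dotProduct, smul_eq_mul] at h
    have hsym : (A *ᵥ w) ⬝ᵥ v = w ⬝ᵥ (A *ᵥ v) := symm_dot hA.1 w v
    have hsym2 : v ⬝ᵥ (A *ᵥ w) = w ⬝ᵥ (A *ᵥ v) := by rw [dotProduct_comm]; exact hsym
    rw [hsym]
    rw [hsym2] at h
    ring_nf at h ⊢
    linarith [h]
  have hd := discrim_le_zero key
  rw [discrim] at hd
  nlinarith [hd]

lemma herm_smul_vmv (d : ℝ) (y : Fin n → ℝ) : (d • vecMulVec y y).IsHermitian := by
  have h := (posSemidef_vecMulVec y).1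
  unfold Matrix.IsHermitian at *
  rw [conjTranspose_smul, h, star_trivial]

lemma vecMulVec_sqrt_smul (c : ℝ) (hc : 0 ≤ c) (y : Fin n → ℝ) :
    vecMulVec (Real.sqrt c • y) (Real.sqrt c • y) = c • vecMulVec y y := by
  ext i j
  simp only [vecMulVec_apply, Pi.smul_apply, smul_eq_mul, Matrix.smul_apply]
  rw [show Real.sqrt c * y i * (Real.sqrt c * y j)
      = (Real.sqrt c * Real.sqrt c) * (y i * y j) from by ring, Real.mul_self_sqrt hc]

lemma rank_eq_finrank_range (A : Matrix (Fin n) (Fin n) ℝ) :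
    A.rank = Module.finrank ℝ (LinearMap.range A.mulVecLin) := rfl

lemma main_aux (L : Submodule ℝ (Matrix (Fin n) (Fin n) ℝ))
    (K : Set (Matrix (Fin n) (Fin n) ℝ))
    (hK : K = {X | X ∈ L ∧ X.PosSemidef})
    (hROG : IsROG K) :
    ∀ (k : ℕ) (X : Matrix (Fin n) (Fin n) ℝ), X ∈ K → X.rank = k →
    ∃ x : Fin k → (Fin n → ℝ), LinearIndependent ℝ x ∧
      (∀ i, vecMulVec (x i) (x i) ∈ K) ∧ X = ∑ i, vecMulVec (x i) (x i) := by
  intro k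
  induction k using Nat.strong_induction_on with
  | _ k IH =>
  intro X hXK hrk
  have hXL : X ∈ L := (hK ▸ hXK).1
  have hXP : X.PosSemidef := (hK ▸ hXK).2
  match k, hrk with
  | 0, hrk =>
    -- X = 0
    have hX0 : X = 0 := by
      have h0 : LinearMap.range X.mulVecLin = ⊥ := by
        have := hrk
        rw [rank_eq_finrank_range] at this
        exact Submodule.finrank_eq_zero.mp this
      have hv : ∀ v, X *ᵥ v = 0 := by
        intro v
        have hm : X.mulVecLin v ∈ LinearMap.range X.mulVecLin := LinearMap.mem_range_self _ v
        rw [h0] at hm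
        simpa [mulVecLin_apply] using hm
      ext i j
      have := congrFun (hv (Pi.single j 1)) i
      simpa [mulVec_single] using this
    refine ⟨Fin.elim0, ?_, fun i => i.elim0, ?_⟩
    · exact linearIndependent_empty_type
    · simpa using hX0
  | (m+1), hrk =>
    -- get ROG decomposition
    obtain ⟨N, Y, hY, hXsum⟩ := hROG X hXK
    have hX0 : X ≠ 0 := by
      intro h
      rw [h, rank_zero] at hrk
      exact Nat.succ_ne_zero m hrk.symm
    have hN : 0 < N := by
      rcases Nat.eq_zero_or_pos N with h | h
      · subst h
        simp at hXsum
        exact absurd hXsum hX0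
      · exact h
    set i0 : Fin N := ⟨0, hN⟩
    have hY0K : Y i0 ∈ K := (hY i0).1
    have hY0P : (Y i0).PosSemidef := (hK ▸ hY0K).2
    have hY0L : Y i0 ∈ L := (hK ▸ hY0K).1
    obtain ⟨y, hy⟩ := psd_rank_le_one_decomp hY0P (le_of_eq (hY i0).2)
    have hy0 : y ≠ 0 := by
      intro h
      have hz : Y i0 = 0 := by
        rw [hy, h]
        ext i j
        simp [vecMulVec_apply]
      have h1 := (hY i0).2
      rw [hz, rank_zero] at h1
      exact one_ne_zero h1.symm
    have hyyL : vecMulVec y y ∈ L := hy ▸ hY0L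
    -- the set S of feasible coefficients
    set S : Set ℝ := {d : ℝ | (X - d • vecMulVec y y).PosSemidef} with hS
    have hXsubY0 : X - Y i0 = ∑ i ∈ Finset.univ.erase i0, Y i := by
      rw [hXsum, ← Finset.sum_erase_add Finset.univ Y (Finset.mem_univ i0)]
      exact add_sub_cancel_right _ _
    have hS1 : (1 : ℝ) ∈ S := by
      show (X - (1:ℝ) • vecMulVec y y).PosSemidef
      rw [one_smul, ← hy, hXsubY0]
      exact posSemidef_sum _ _ (fun i _ => (hK ▸ (hY i).1).2)
    have hyy : 0 < y ⬝ᵥ y := by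
      have h1 : y ⬝ᵥ y ≠ 0 := fun h => hy0 (dotProduct_self_eq_zero.mp h)
      have h2 : 0 ≤ y ⬝ᵥ y := Finset.sum_nonneg fun i _ => mul_self_nonneg _
      exact lt_of_le_of_ne h2 (Ne.symm h1)
    have hSbdd : BddAbove S := by
      refine ⟨(y ⬝ᵥ (X *ᵥ y)) / (y ⬝ᵥ y) ^ 2, fun d hd => ?_⟩
      have hq := hd.dotProduct_mulVec_nonneg y
      rw [star_trivial, quad_sub_smul] at hq
      rw [le_div_iff₀ (by positivity)]
      linarith [hq]
    set δ : ℝ := sSup S with hδ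
    have hδ1 : 1 ≤ δ := le_csSup hSbdd hS1
    have hδ0 : 0 < δ := lt_of_lt_of_le one_pos hδ1
    -- δ ∈ S
    have hδS : (X - δ • vecMulVec y y).PosSemidef := by
      refine Matrix.PosSemidef.of_dotProduct_mulVec_nonneg ?_ ?_
      · exact hXP.1.sub (herm_smul_vmv δ y)
      · intro v
        rw [star_trivial, quad_sub_smul]
        rcases eq_or_ne (y ⬝ᵥ v) 0 with h | h
        · rw [h]
          simpa using hXP.dotProduct_mulVec_nonneg v
        · have hub : δ ≤ (v ⬝ᵥ (X *ᵥ v)) / (y ⬝ᵥ v) ^ 2 := by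
            apply csSup_le ⟨1, hS1⟩
            intro d hd
            have hq := hd.dotProduct_mulVec_nonneg v
            rw [star_trivial, quad_sub_smul] at hq
            rw [le_div_iff₀ (by positivity)]
            linarith [hq]
          have h2 : 0 < (y ⬝ᵥ v) ^ 2 := by positivity
          have h3 := (le_div_iff₀ h2).mp hub
          linarith [h3]
    set X' : Matrix (Fin n) (Fin n) ℝ := X - δ • vecMulVec y y with hX'
    have hX'K : X' ∈ K := by
      rw [hK]
      exact ⟨L.sub_mem hXL (L.smul_mem δ hyyL), hδS⟩
    -- y is not in the range of X'
    have hX'P : X'.PosSemidef := hδS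
    have hyr : ¬ ∃ w, X' *ᵥ w = y := by
      rintro ⟨w, hw⟩
      have hc0 : 0 ≤ w ⬝ᵥ (X' *ᵥ w) := by simpa using hX'P.dotProduct_mulVec_nonneg w
      rcases eq_or_lt_of_le hc0 with hc | hc
      · have hz : X' *ᵥ w = 0 := (hX'P.dotProduct_mulVec_zero_iff w).mp (by simpa using hc.symm)
        rw [hz] at hw
        exact hy0 hw.symm
      · set c := w ⬝ᵥ (X' *ᵥ w) with hcdef
        have hmem : δ + 1 / c ∈ S := by
          show (X - (δ + 1/c) • vecMulVec y y).PosSemidef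
          have hEq : X - (δ + 1/c) • vecMulVec y y = X' - (1/c) • vecMulVec y y := by
            rw [hX', add_smul]
            abel
          rw [hEq]
          refine Matrix.PosSemidef.of_dotProduct_mulVec_nonneg ?_ ?_
          · exact hX'P.1.sub (herm_smul_vmv _ y)
          · intro v
            rw [star_trivial, quad_sub_smul]
            have hcs := psd_cauchy hX'P w v
            rw [hw] at hcs
            have hwy : w ⬝ᵥ y = c := by rw [← hw]
            rw [hwy] at hcs
            have h4 : (1/c) * (y ⬝ᵥ v)^2 ≤ (1/c) * (c * (v ⬝ᵥ (X' *ᵥ v))) :=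
              mul_le_mul_of_nonneg_left hcs (by positivity)
            have h5 : (1/c) * (c * (v ⬝ᵥ (X' *ᵥ v))) = v ⬝ᵥ (X' *ᵥ v) := by
              field_simp
            linarith [h4]
        have hle := le_csSup hSbdd hmem
        have hpos : 0 < 1 / c := by positivity
        linarith
    have hv0 : ∃ v, X' *ᵥ v = 0 ∧ y ⬝ᵥ v ≠ 0 := by
      by_contra h
      push_neg at h
      exact hyr (mem_range_of_symm hX'P.1 fun v hv => h v hv)
    obtain ⟨v0, hv01, hv02⟩ := hv0
    have hXeq : X = X' + δ • vecMulVec y y := by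
      rw [hX']
      abel
    have hXmv : ∀ v, X *ᵥ v = X' *ᵥ v + (δ * (y ⬝ᵥ v)) • y := by
      intro v
      rw [hXeq, add_mulVec, smul_mulVec, mulVec_vecMulVec_self, smul_smul]
    have hker : ∀ v, X *ᵥ v = 0 → X' *ᵥ v = 0 ∧ y ⬝ᵥ v = 0 := by
      intro v hv
      have hq : v ⬝ᵥ (X *ᵥ v) = 0 := by rw [hv, dotProduct_zero]
      have hq' : v ⬝ᵥ (X' *ᵥ v) = v ⬝ᵥ (X *ᵥ v) - δ * (y ⬝ᵥ v)^2 := quad_sub_smul X δ y v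
      have h1 : 0 ≤ v ⬝ᵥ (X' *ᵥ v) := by simpa using hX'P.dotProduct_mulVec_nonneg v
      have h2 : 0 ≤ δ * (y ⬝ᵥ v)^2 := by positivity
      have h3 : v ⬝ᵥ (X' *ᵥ v) = 0 := by linarith
      refine ⟨(hX'P.dotProduct_mulVec_zero_iff v).mp (by simpa using h3), ?_⟩
      have h4 : δ * (y ⬝ᵥ v)^2 = 0 := by linarith
      have h5 := (mul_eq_zero.mp h4).resolve_left (ne_of_gt hδ0)
      exact (pow_eq_zero_iff two_ne_zero).mp h5
    -- rank of X' is m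
    have hrkX' : X'.rank = m := by
      have hsub : LinearMap.ker X.mulVecLin ≤ LinearMap.ker X'.mulVecLin := by
        intro v hv
        rw [LinearMap.mem_ker] at hv ⊢
        exact (hker v hv).1
      have hv0K' : v0 ∈ LinearMap.ker X'.mulVecLin := by
        rw [LinearMap.mem_ker]
        exact hv01
      have hv0K : v0 ∉ LinearMap.ker X.mulVecLin := by
        rw [LinearMap.mem_ker]
        intro h
        have := hXmv v0
        rw [hv01, zero_add] at this
        rw [show X.mulVecLin v0 = X *ᵥ v0 from rfl, this] at h
        exact (smul_ne_zero (mul_ne_zero (ne_of_gt hδ0) hv02) hy0) h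
      have hKlt : LinearMap.ker X.mulVecLin < LinearMap.ker X'.mulVecLin :=
        lt_of_le_of_ne hsub (fun h => hv0K (h ▸ hv0K'))
      have hlt := Submodule.finrank_lt_finrank_of_lt hKlt
      have e1 := LinearMap.finrank_range_add_finrank_ker X.mulVecLin
      have e2 := LinearMap.finrank_range_add_finrank_ker X'.mulVecLin
      have hn' : Module.finrank ℝ (Fin n → ℝ) = n := by
        simp [Module.finrank_fintype_fun_eq_card]
      rw [hn'] at e1 e2
      have hrange : LinearMap.range X.mulVecLin ≤ LinearMap.range X'.mulVecLin ⊔ (ℝ ∙ y) := by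
        rintro u ⟨v, rfl⟩
        have h := hXmv v
        rw [show X.mulVecLin v = X *ᵥ v from rfl, h]
        exact Submodule.add_mem_sup (LinearMap.mem_range_self _ v)
          (Submodule.smul_mem _ _ (Submodule.mem_span_singleton_self y))
      have hmono := Submodule.finrank_mono hrange
      have hsup := Submodule.finrank_add_le_finrank_add_finrank
        (LinearMap.range X'.mulVecLin) (ℝ ∙ y)
      have hy1 : Module.finrank ℝ (ℝ ∙ y) = 1 := finrank_span_singleton hy0
      rw [hy1] at hsup
      rw [rank_eq_finrank_range] at hrk
      rw [rank_eq_finrank_range]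
      omega
    obtain ⟨z, hzli, hzK, hzsum⟩ := IH m (Nat.lt_succ_self m) X' hX'K hrkX'
    have hsd : vecMulVec (Real.sqrt δ • y) (Real.sqrt δ • y) = δ • vecMulVec y y :=
      vecMulVec_sqrt_smul δ hδ0.le y
    have hmem0 : vecMulVec (Real.sqrt δ • y) (Real.sqrt δ • y) ∈ K := by
      rw [hsd, hK]
      refine ⟨L.smul_mem δ hyyL, ?_⟩
      rw [← hsd]
      exact posSemidef_vecMulVec _
    have hzr : ∀ i, ∃ w, X' *ᵥ w = z i := by
      intro i
      apply mem_range_of_symm hX'P.1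
      intro v hv
      have hq : v ⬝ᵥ (X' *ᵥ v) = 0 := by rw [hv, dotProduct_zero]
      rw [hzsum, dot_mulVec_sum] at hq
      have hterm : ∀ j ∈ Finset.univ, (0:ℝ) ≤ v ⬝ᵥ (vecMulVec (z j) (z j) *ᵥ v) := by
        intro j _
        rw [quad_vecMulVec]
        positivity
      have h6 := (Finset.sum_eq_zero_iff_of_nonneg hterm).mp hq i (Finset.mem_univ i)
      rw [quad_vecMulVec] at h6
      exact (pow_eq_zero_iff two_ne_zero).mp h6
    have hnotmem : Real.sqrt δ • y ∉ Submodule.span ℝ (Set.range z) := by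
      intro hmem
      have hspan : Submodule.span ℝ (Set.range z) ≤ LinearMap.range X'.mulVecLin := by
        rw [Submodule.span_le]
        rintro _ ⟨i, rfl⟩
        obtain ⟨w, hw⟩ := hzr i
        exact ⟨w, hw⟩
      have h1 : Real.sqrt δ • y ∈ LinearMap.range X'.mulVecLin := hspan hmem
      have hs0 : Real.sqrt δ ≠ 0 := by positivity
      have h2 : y ∈ LinearMap.range X'.mulVecLin := by
        have h3 := Submodule.smul_mem (LinearMap.range X'.mulVecLin) (Real.sqrt δ)⁻¹ h1
        rwa [inv_smul_smul₀ hs0] at h3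
      obtain ⟨w, hw⟩ := h2
      exact hyr ⟨w, hw⟩
    refine ⟨Fin.cons (Real.sqrt δ • y) z, ?_, ?_, ?_⟩
    · exact linearIndependent_fin_cons.mpr ⟨hzli, hnotmem⟩
    · intro i
      refine Fin.cases ?_ ?_ i
      · simpa [Fin.cons_zero] using hmem0
      · intro j
        simpa [Fin.cons_succ] using hzK j
    · rw [Fin.sum_univ_succ]
      simp only [Fin.cons_zero, Fin.cons_succ]
      rw [hsd, ← hzsum, hXeq]
      abel


end helpers

theorem stmt_7 {n : ℕ} (L : Submodule ℝ (Matrix (Fin n) (Fin n) ℝ))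
    (K : Set (Matrix (Fin n) (Fin n) ℝ))
    (hK : K = {X | X ∈ L ∧ X.PosSemidef})
    (hROG : IsROG K)
    (X : Matrix (Fin n) (Fin n) ℝ) (hX : X ∈ K)
    (k : ℕ) (hk : X.rank = k) (hk1 : 1 ≤ k) :
    ∃ x : Fin k → (Fin n → ℝ), LinearIndependent ℝ x ∧
      (∀ i, vecMulVec (x i) (x i) ∈ K) ∧ X = ∑ i, vecMulVec (x i) (x i) := by
  exact main_aux L K hK hROG k X hX hk
end

section
/- Let K = L ∩ S₊ⁿ be a rank one generated spectrahedral cone, let ℝⁿ = H₁ ⊕ ⋯ ⊕ H_m be a direct sum decomposition into linear subspaces, and suppose L ⊆ L_n(H₁) + ⋯ + L_n(H_m). Then every X ∈ K can be written as X = X₁ + ⋯ + X_m with X_k ∈ K ∩ L_n(H_k) for each k = 1,…,m. -/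
open Matrix

/-- `L_n(H)`: the linear span of the rank-1 matrices `x xᵀ` with `x ∈ H`. -/
def LnSpan {n : ℕ} (H : Submodule ℝ (Fin n → ℝ)) :
    Submodule ℝ (Matrix (Fin n) (Fin n) ℝ) :=
  Submodule.span ℝ {M | ∃ x ∈ H, M = vecMulVec x x}

lemma psd_rank_one {n : ℕ} (M : Matrix (Fin n) (Fin n) ℝ) (hpsd : M.PosSemidef)
    (hr : M.rank = 1) : ∃ x : Fin n → ℝ, x ≠ 0 ∧ M = vecMulVec x x := by
  have hr' : Module.finrank ℝ (LinearMap.range M.mulVecLin) = 1 := hr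
  obtain ⟨u, hu0, hu⟩ := (finrank_eq_one_iff').mp hr'
  have hcol : ∀ b, ∃ c : ℝ, ∀ a, M a b = c * (u : Fin n → ℝ) a := by
    intro b
    have hmem : (fun a => M a b) ∈ LinearMap.range M.mulVecLin := by
      refine ⟨Pi.single b 1, ?_⟩
      simp [Matrix.mulVecLin_apply]; rfl
    obtain ⟨c, hc⟩ := hu ⟨_, hmem⟩
    have hc' := congrArg Subtype.val hc
    exact ⟨c, fun a => by
      have := congrFun hc' a
      simpa using this.symm⟩
  choose c hc using hcol
  have hu0' : (u : Fin n → ℝ) ≠ 0 := by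
    simpa [Submodule.coe_eq_zero] using (Subtype.coe_injective.ne hu0)
  obtain ⟨a₀, ha₀⟩ := Function.ne_iff.mp hu0'
  simp only [Pi.zero_apply] at ha₀
  have hsym : ∀ a b, M a b = M b a := by
    intro a b
    have := congrFun (congrFun hpsd.isHermitian b) a
    simpa [Matrix.conjTranspose_apply] using this
  set v := (u : Fin n → ℝ)
  set t := c a₀ / v a₀ with ht
  have hcb : ∀ b, c b = t * v b := by
    intro b
    have h1 : c b * v a₀ = c a₀ * v b := by
      have := hsym a₀ b
      rw [hc b a₀, hc a₀ b] at this
      linarith [this]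
    rw [ht, div_mul_eq_mul_div, eq_div_iff ha₀]
    linarith
  have hM : ∀ a b, M a b = t * v a * v b := by
    intro a b
    rw [hc b a, hcb b]; ring
  have htnn : 0 ≤ t := by
    have h := hpsd.dotProduct_mulVec_nonneg (Pi.single a₀ 1)
    simp only [star_trivial] at h
    have heq : (Pi.single a₀ 1 : Fin n → ℝ) ⬝ᵥ M *ᵥ Pi.single a₀ 1 = M a₀ a₀ := by
      simp [dotProduct, Pi.single_apply]
    rw [heq, hM a₀ a₀] at h
    have hsq : 0 < v a₀ * v a₀ := mul_self_pos.mpr ha₀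
    nlinarith
  have ht0 : t ≠ 0 := by
    intro h
    have hM0 : M = 0 := by
      ext a b; simp [hM a b, h]
    rw [hM0, Matrix.rank_zero] at hr
    exact zero_ne_one hr
  refine ⟨Real.sqrt t • v, ?_, ?_⟩
  · intro h
    have h2 := congrFun h a₀
    simp only [Pi.smul_apply, smul_eq_mul, Pi.zero_apply] at h2
    rcases mul_eq_zero.mp h2 with h1 | h1
    · exact ht0 (le_antisymm (Real.sqrt_eq_zero'.mp h1) htnn)
    · exact ha₀ h1
  · ext a b
    simp only [vecMulVec_apply, Pi.smul_apply, smul_eq_mul]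
    rw [hM a b]
    linear_combination (-(v a * v b)) * Real.mul_self_sqrt htnn

lemma vecMulVec_zero_left {n : ℕ} (z : Fin n → ℝ) : vecMulVec (0 : Fin n → ℝ) z = 0 := by
  ext a b; simp [vecMulVec_apply]

lemma vecMulVec_zero_right {n : ℕ} (z : Fin n → ℝ) : vecMulVec z (0 : Fin n → ℝ) = 0 := by
  ext a b; simp [vecMulVec_apply]

lemma mul_vecMulVec_mul {n : ℕ} (P Q : Matrix (Fin n) (Fin n) ℝ) (y z : Fin n → ℝ) :
    P * vecMulVec y z * Qᵀ = vecMulVec (P *ᵥ y) (Q *ᵥ z) := by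
  ext a b
  simp only [mul_apply, vecMulVec_apply, transpose_apply, mulVec, dotProduct,
    Finset.sum_mul, Finset.mul_sum]
  apply Finset.sum_congr rfl
  intro c _
  apply Finset.sum_congr rfl
  intro d _
  ring

lemma mem_of_vecMulVec_mem {n m : ℕ} (H : Fin m → Submodule ℝ (Fin n → ℝ))
    (hInternal : DirectSum.IsInternal H) {x : Fin n → ℝ} (hx : x ≠ 0)
    (hmem : vecMulVec x x ∈ ⨆ k, LnSpan (H k)) : ∃ k, x ∈ H k := by
  classical
  set e := LinearEquiv.ofBijective (DirectSum.coeLinearMap H) hInternal with he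
  set π : Fin m → ((Fin n → ℝ) →ₗ[ℝ] (Fin n → ℝ)) :=
    fun j => (H j).subtype ∘ₗ (DirectSum.component ℝ (Fin m) (fun k => H k) j) ∘ₗ
      e.symm.toLinearMap with hπ
  have hπapp : ∀ j y, π j y = ((e.symm y) j : Fin n → ℝ) := fun j y => rfl
  have hπsum : ∀ y : Fin n → ℝ, ∑ j, π j y = y := by
    intro y
    have h1 : ∑ j, DirectSum.of (fun k => H k) j ((e.symm y) j) = e.symm y :=
      DirectSum.sum_univ_of _
    have h2 := congrArg (DirectSum.coeLinearMap H) h1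
    rw [map_sum] at h2
    simp only [DirectSum.coeLinearMap_of] at h2
    have h3 : DirectSum.coeLinearMap H (e.symm y) = y := by
      have := e.apply_symm_apply y
      exact this
    rw [h3] at h2
    simpa [hπapp] using h2
  have hπzero : ∀ {k j : Fin m}, k ≠ j → ∀ {y : Fin n → ℝ}, y ∈ H k → π j y = 0 := by
    intro k j hkj y hy
    have := hInternal.ofBijective_coeLinearMap_of_mem_ne hkj hy
    rw [hπapp, this]; rfl
  set P : Fin m → Matrix (Fin n) (Fin n) ℝ := fun j => LinearMap.toMatrix' (π j) with hP
  have hPmul : ∀ j y, (P j) *ᵥ y = π j y := by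
    intro j y
    rw [hP, ← Matrix.toLin'_apply, Matrix.toLin'_toMatrix']
  have key : ∀ j l : Fin m, j ≠ l → vecMulVec (π j x) (π l x) = 0 := by
    intro j l hjl
    set Φ : Matrix (Fin n) (Fin n) ℝ →ₗ[ℝ] Matrix (Fin n) (Fin n) ℝ :=
      (LinearMap.mulRight ℝ (P l)ᵀ) ∘ₗ (LinearMap.mulLeft ℝ (P j)) with hΦ
    have hker : (⨆ k, LnSpan (H k)) ≤ LinearMap.ker Φ := by
      apply iSup_le
      intro k
      rw [LnSpan, Submodule.span_le]
      rintro M ⟨y, hy, rfl⟩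
      simp only [SetLike.mem_coe, LinearMap.mem_ker, hΦ, LinearMap.comp_apply,
        LinearMap.mulLeft_apply, LinearMap.mulRight_apply]
      rw [mul_vecMulVec_mul, hPmul, hPmul]
      rcases ne_or_eq k j with h | h
      · rw [hπzero h hy, vecMulVec_zero_left]
      · have : k ≠ l := by rw [h]; exact hjl
        rw [hπzero this hy, vecMulVec_zero_right]
    have := hker hmem
    simp only [LinearMap.mem_ker, hΦ, LinearMap.comp_apply, LinearMap.mulLeft_apply,
      LinearMap.mulRight_apply] at this
    rw [mul_vecMulVec_mul, hPmul, hPmul] at this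
    exact this
  have hexists : ∃ j, π j x ≠ 0 := by
    by_contra h
    push_neg at h
    apply hx
    rw [← hπsum x]
    simp [h]
  obtain ⟨j, hj⟩ := hexists
  refine ⟨j, ?_⟩
  have hzero : ∀ l, l ≠ j → π l x = 0 := by
    intro l hl
    obtain ⟨a, ha⟩ := Function.ne_iff.mp hj
    ext b
    have := congrFun (congrFun (key j l (Ne.symm hl)) a) b
    simp only [vecMulVec_apply, Matrix.zero_apply] at this
    rcases mul_eq_zero.mp this with h | h
    · exact absurd h (by simpa using ha)
    · simpa using h
  have hsum := hπsum x
  have hone : ∑ l, π l x = π j x :=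
    Finset.sum_eq_single j (fun l _ hl => hzero l hl)
      (fun h => absurd (Finset.mem_univ j) h)
  have hxj : x = π j x := hsum.symm.trans hone
  rw [hxj, hπapp]
  exact ((e.symm x) j).2

lemma psd_sum {n N : ℕ} (s : Finset (Fin N)) (Y : Fin N → Matrix (Fin n) (Fin n) ℝ)
    (h : ∀ i ∈ s, (Y i).PosSemidef) : (∑ i ∈ s, Y i).PosSemidef := by
  induction s using Finset.induction_on with
  | empty => simpa using Matrix.PosSemidef.zero
  | insert _ _ hni ih =>
    rw [Finset.sum_insert hni]
    exact (h _ (Finset.mem_insert_self _ _)).add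
      (ih fun i hi => h i (Finset.mem_insert_of_mem hi))

theorem stmt_11 {n m : ℕ} (L : Submodule ℝ (Matrix (Fin n) (Fin n) ℝ))
    (K : Set (Matrix (Fin n) (Fin n) ℝ))
    (hK : K = {X | X ∈ L ∧ X.PosSemidef})
    (hROG : IsROG K)
    (H : Fin m → Submodule ℝ (Fin n → ℝ))
    (hInternal : DirectSum.IsInternal H)
    (hL : ∀ X ∈ L, X ∈ ⨆ k, LnSpan (H k)) :
    ∀ X ∈ K, ∃ Y : Fin m → Matrix (Fin n) (Fin n) ℝ,
      (∀ k, Y k ∈ K ∧ Y k ∈ LnSpan (H k)) ∧ X = ∑ k, Y k := by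
  classical
  intro X hX
  obtain ⟨N, Y, hY, hXsum⟩ := hROG X hX
  -- each Y i is vecMulVec x x with x in some H k
  have hdecomp : ∀ i, ∃ k : Fin m, ∃ x : Fin n → ℝ, x ∈ H k ∧ Y i = vecMulVec x x := by
    intro i
    have hYK := (hY i).1
    rw [hK] at hYK
    obtain ⟨x, hx0, hxeq⟩ := psd_rank_one (Y i) hYK.2 (hY i).2
    have hmem : vecMulVec x x ∈ ⨆ k, LnSpan (H k) := by
      rw [← hxeq]; exact hL (Y i) hYK.1
    obtain ⟨k, hk⟩ := mem_of_vecMulVec_mem H hInternal hx0 hmem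
    exact ⟨k, x, hk, hxeq⟩
  choose κ x hxmem hxeq using hdecomp
  refine ⟨fun k => ∑ i ∈ Finset.univ.filter (fun i => κ i = k), Y i, ?_, ?_⟩
  · intro k
    constructor
    · rw [hK]
      constructor
      · apply Submodule.sum_mem
        intro i _
        have := (hY i).1
        rw [hK] at this
        exact this.1
      · apply psd_sum
        intro i _
        have := (hY i).1
        rw [hK] at this
        exact this.2
    · apply Submodule.sum_mem
      intro i hi
      rw [Finset.mem_filter] at hi
      rw [hxeq i]
      apply Submodule.subset_span
      exact ⟨x i, hi.2 ▸ hxmem i, rfl⟩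
  · rw [hXsum]
    exact (Finset.sum_fiberwise Finset.univ κ Y).symm
end

section
/- Let n' < n, let P be a real n'×n matrix of rank n' (so that x ↦ Px is a surjective linear map ℝⁿ → ℝ^{n'}), let K' = L' ∩ S₊^{n'} be a spectrahedral cone, and let K = {X ∈ S₊ⁿ : P X Pᵀ ∈ K'} (the full extension of K'). Then every matrix in K is a finite sum of rank-1 matrices belonging to K if and only if every matrix in K' is a finite sum of rank-1 matrices belonging to K'; that is, K is rank one generated if and only if K' is rank one generated. -/
open Matrix

section RogHelpers

lemma myrank_eq_zero_iff {k l : ℕ} {A : Matrix (Fin k) (Fin l) ℝ} : A.rank = 0 ↔ A = 0 := by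
  constructor
  · intro h
    have h1 : LinearMap.range A.mulVecLin = ⊥ := by
      have := Submodule.finrank_eq_zero (R := ℝ) (S := LinearMap.range A.mulVecLin)
      exact this.mp h
    have h2 : A.mulVecLin = 0 := LinearMap.range_eq_bot.mp h1
    ext i j
    have := congrFun (congrArg (fun f => f (Pi.single j 1)) (congrArg DFunLike.coe h2)) i
    simpa [Matrix.mulVecLin_apply, Matrix.mulVec_single] using this
  · rintro rfl; exact Matrix.rank_zero

lemma vecMulVec_mulVec' {m : ℕ} (v w x : Fin m → ℝ) :
    vecMulVec v w *ᵥ x = (w ⬝ᵥ x) • v := by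
  ext i
  simp [vecMulVec_apply, mulVec, dotProduct, Finset.mul_sum, mul_assoc, mul_comm, mul_left_comm]

lemma posSemidef_vecMulVec_s12 {m : ℕ} (v : Fin m → ℝ) : (vecMulVec v v).PosSemidef := by
  refine posSemidef_iff_dotProduct_mulVec.mpr ⟨?_, ?_⟩
  · ext i j
    simp [vecMulVec_apply, conjTranspose_apply, mul_comm]
  · intro x
    rw [vecMulVec_mulVec']
    have : star x ⬝ᵥ ((v ⬝ᵥ x) • v) = (v ⬝ᵥ x) * (x ⬝ᵥ v) := by
      simp [dotProduct_smul, mul_comm]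
    rw [this, dotProduct_comm]
    exact mul_self_nonneg _

lemma rank_vecMulVec_le {m : ℕ} (v w : Fin m → ℝ) : (vecMulVec v w).rank ≤ 1 := by
  rw [vecMulVec_eq (Fin 1)]
  calc (replicateCol (Fin 1) v * replicateRow (Fin 1) w).rank ≤ (replicateCol (Fin 1) v).rank := rank_mul_le_left _ _
  _ ≤ 1 := by simpa using rank_le_card_width (replicateCol (Fin 1) v)

lemma mul_vecMulVec_mul_s12 {k l : ℕ} (P : Matrix (Fin k) (Fin l) ℝ) (v w : Fin l → ℝ) :
    P * vecMulVec v w * Pᵀ = vecMulVec (P *ᵥ v) (P *ᵥ w) := by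
  rw [vecMulVec_eq (Fin 1), vecMulVec_eq (Fin 1), replicateCol_mulVec, replicateRow_mulVec,
    transpose_mul, transpose_replicateCol]
  simp only [Matrix.mul_assoc]

lemma transpose_mul_self_eq_sum {k l : ℕ} (C : Matrix (Fin k) (Fin l) ℝ) :
    Cᵀ * C = ∑ a : Fin k, vecMulVec (C a) (C a) := by
  ext i j
  simp [mul_apply, Matrix.sum_apply, vecMulVec_apply]

open scoped MatrixOrder in
lemma posSemidef_iff_eq_transpose_mul_self {m : ℕ} {A : Matrix (Fin m) (Fin m) ℝ} :
    A.PosSemidef ↔ ∃ B : Matrix (Fin m) (Fin m) ℝ, A = Bᴴ * B := by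
  constructor
  · intro hA
    obtain ⟨B, hB⟩ := CStarAlgebra.nonneg_iff_eq_star_mul_self.mp hA.nonneg
    exact ⟨B, hB⟩
  · rintro ⟨B, rfl⟩
    exact posSemidef_conjTranspose_mul_self B

lemma psd_decomp {m : ℕ} {X : Matrix (Fin m) (Fin m) ℝ} (hX : X.PosSemidef) :
    ∃ v : Fin m → (Fin m → ℝ), X = ∑ a, vecMulVec (v a) (v a) := by
  obtain ⟨B, hB⟩ := posSemidef_iff_eq_transpose_mul_self.mp hX
  exact ⟨fun a => B a, by rw [hB, conjTranspose_eq_transpose_of_trivial,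
    transpose_mul_self_eq_sum]⟩

lemma dot_transpose_mulVec {p s : ℕ} (M : Matrix (Fin p) (Fin s) ℝ) (y : Fin p → ℝ) :
    (Mᵀ *ᵥ y) ⬝ᵥ (Mᵀ *ᵥ y) = y ⬝ᵥ ((M * Mᵀ) *ᵥ y) := by
  nth_rewrite 1 [mulVec_transpose]
  rw [← mulVec_mulVec, ← dotProduct_mulVec]

lemma toEuclideanLin_mul {a b c : ℕ} (M : Matrix (Fin a) (Fin b) ℝ) (N : Matrix (Fin b) (Fin c) ℝ) :
    toEuclideanLin (M * N) = (toEuclideanLin M) ∘ₗ (toEuclideanLin N) := by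
  apply LinearMap.ext
  intro v
  simp [toEuclideanLin_apply, ← mulVec_mulVec]

lemma exists_contraction {p q r : ℕ} (B : Matrix (Fin p) (Fin q) ℝ) (A : Matrix (Fin p) (Fin r) ℝ)
    (h : B * Bᵀ = A * Aᵀ) :
    ∃ Q : Matrix (Fin q) (Fin r) ℝ, B * Q = A ∧ (1 - Q * Qᵀ).PosSemidef := by
  set T : EuclideanSpace ℝ (Fin p) →ₗ[ℝ] EuclideanSpace ℝ (Fin q) := toEuclideanLin Bᵀ with hT
  set Am : EuclideanSpace ℝ (Fin p) →ₗ[ℝ] EuclideanSpace ℝ (Fin r) := toEuclideanLin Aᵀ with hAm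
  -- norms agree
  have hnorm : ∀ y, ‖T y‖ = ‖Am y‖ := by
    intro y
    have h1 : ‖T y‖ ^ 2 = ‖Am y‖ ^ 2 := by
      rw [← real_inner_self_eq_norm_sq, ← real_inner_self_eq_norm_sq]
      have e1 : (inner ℝ (T y) (T y) : ℝ) = (Bᵀ *ᵥ (WithLp.equiv 2 _ y)) ⬝ᵥ (Bᵀ *ᵥ (WithLp.equiv 2 _ y)) := by
        simp [hT, toEuclideanLin_apply, PiLp.inner_apply, RCLike.inner_apply, dotProduct]
        rw [EuclideanSpace.norm_sq_eq]; simp [sq]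
      have e2 : (inner ℝ (Am y) (Am y) : ℝ) = (Aᵀ *ᵥ (WithLp.equiv 2 _ y)) ⬝ᵥ (Aᵀ *ᵥ (WithLp.equiv 2 _ y)) := by
        simp [hAm, toEuclideanLin_apply, PiLp.inner_apply, RCLike.inner_apply, dotProduct]
        rw [EuclideanSpace.norm_sq_eq]; simp [sq]
      rw [e1, e2, dot_transpose_mulVec, dot_transpose_mulVec, h]
    have h2 := congrArg Real.sqrt h1
    rwa [Real.sqrt_sq (norm_nonneg _), Real.sqrt_sq (norm_nonneg _)] at h2
  -- kernel inclusion
  have hker : LinearMap.ker T ≤ LinearMap.ker Am := by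
    intro y hy
    have : ‖Am y‖ = 0 := by rw [← hnorm]; simp [LinearMap.mem_ker.mp hy]
    exact LinearMap.mem_ker.mpr (norm_eq_zero.mp this)
  set U : Submodule ℝ (EuclideanSpace ℝ (Fin q)) := LinearMap.range T with hU
  let f : U →ₗ[ℝ] EuclideanSpace ℝ (Fin r) :=
    ((LinearMap.ker T).liftQ Am hker) ∘ₗ (T.quotKerEquivRange.symm : U ≃ₗ[ℝ] _).toLinearMap
  have hf : ∀ (y : EuclideanSpace ℝ (Fin p)) (hy : T y ∈ U), f ⟨T y, hy⟩ = Am y := by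
    intro y hy
    have h1 : T.quotKerEquivRange.symm ⟨T y, hy⟩ = (LinearMap.ker T).mkQ y :=
      T.quotKerEquivRange_symm_apply_image y hy
    simp only [f, LinearMap.comp_apply, LinearEquiv.coe_coe, h1]
    exact Submodule.liftQ_apply _ _ _
  let S : EuclideanSpace ℝ (Fin q) →ₗ[ℝ] EuclideanSpace ℝ (Fin r) :=
    f ∘ₗ (U.orthogonalProjectionOnto : EuclideanSpace ℝ (Fin q) →L[ℝ] U).toLinearMap
  have hS1 : ∀ y, S (T y) = Am y := by
    intro y
    have hmem : T y ∈ U := LinearMap.mem_range_self T y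
    have hproj : U.orthogonalProjectionOnto (T y) = ⟨T y, hmem⟩ := by
      apply Subtype.ext
      exact U.starProjection_eq_self_iff.mpr hmem
    simp only [S, LinearMap.comp_apply, ContinuousLinearMap.coe_coe, hproj]
    exact hf y hmem
  have hS2 : ∀ x, ‖S x‖ ≤ ‖x‖ := by
    intro x
    obtain ⟨y, hy⟩ := (U.orthogonalProjectionOnto x).2
    have hx : S x = Am y := by
      have : U.orthogonalProjectionOnto x = ⟨T y, LinearMap.mem_range_self T y⟩ :=
        Subtype.ext hy.symm
      simp only [S, LinearMap.comp_apply, ContinuousLinearMap.coe_coe, this]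
      exact hf y _
    rw [hx, ← hnorm]
    calc ‖T y‖ = ‖(U.orthogonalProjectionOnto x : EuclideanSpace ℝ (Fin q))‖ := by rw [hy]
    _ ≤ 1 * ‖x‖ := le_trans ((U.orthogonalProjectionOnto).le_opNorm x)
        (mul_le_mul_of_nonneg_right (Submodule.orthogonalProjectionOnto_norm_le U) (norm_nonneg x))
    _ = ‖x‖ := one_mul _
  -- back to matrices
  set MS : Matrix (Fin r) (Fin q) ℝ := Matrix.toEuclideanLin.symm S with hMS
  have hSM : toEuclideanLin MS = S := Matrix.toEuclideanLin.apply_symm_apply S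
  refine ⟨MSᵀ, ?_, ?_⟩
  · have key : MS * Bᵀ = Aᵀ := by
      apply Matrix.toEuclideanLin.injective
      rw [toEuclideanLin_mul, hSM]
      apply LinearMap.ext
      intro y
      exact hS1 y
    have := congrArg Matrix.transpose key
    rwa [transpose_mul, transpose_transpose, transpose_transpose] at this
  · have hQt : ∀ x : Fin q → ℝ, MS *ᵥ x = WithLp.equiv 2 (Fin r → ℝ) (S ((WithLp.equiv 2 (Fin q → ℝ)).symm x)) := by
      intro x
      rw [← hSM, toEuclideanLin_apply]
      simp
    refine posSemidef_iff_dotProduct_mulVec.mpr ⟨?_, ?_⟩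
    · rw [Matrix.IsHermitian, conjTranspose_eq_transpose_of_trivial, transpose_sub,
        transpose_one, transpose_mul, transpose_transpose]
    · intro x
      have hx : star x = x := by
        funext i; simp
      rw [hx, sub_mulVec, dotProduct_sub, one_mulVec]
      have e1 : x ⬝ᵥ ((MSᵀ * MSᵀᵀ) *ᵥ x) = (MS *ᵥ x) ⬝ᵥ (MS *ᵥ x) := by
        rw [← dot_transpose_mulVec MSᵀ x, transpose_transpose]
      rw [e1]
      set x' : EuclideanSpace ℝ (Fin q) := (WithLp.equiv 2 (Fin q → ℝ)).symm x with hx'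
      have e2 : (MS *ᵥ x) ⬝ᵥ (MS *ᵥ x) = ‖S x'‖ ^ 2 := by
        rw [hQt x, ← real_inner_self_eq_norm_sq]
        simp [PiLp.inner_apply, RCLike.inner_apply, dotProduct]
        rw [EuclideanSpace.norm_sq_eq]; simp [sq, hx']
      have e3 : x ⬝ᵥ x = ‖x'‖ ^ 2 := by
        rw [← real_inner_self_eq_norm_sq]
        simp [PiLp.inner_apply, RCLike.inner_apply, dotProduct, hx']
        rw [EuclideanSpace.norm_sq_eq]; simp [sq]
      rw [e2, e3]
      have := pow_le_pow_left₀ (norm_nonneg (S x')) (hS2 x') 2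
      linarith

lemma rank_one_psd {m : ℕ} {X : Matrix (Fin m) (Fin m) ℝ} (hX : X.PosSemidef)
    (hr : X.rank = 1) : ∃ v : Fin m → ℝ, X = vecMulVec v v := by
  classical
  have hX0 : X ≠ 0 := by
    intro h
    rw [h, Matrix.rank_zero] at hr
    exact one_ne_zero hr.symm
  have hdiag : ∃ i, X i i ≠ 0 := by
    by_contra hc
    push_neg at hc
    apply hX0
    ext i j
    have h1 : star (Pi.single i (1:ℝ)) ⬝ᵥ X *ᵥ (Pi.single i 1) = 0 := by
      have : X *ᵥ Pi.single i 1 = fun k => X k i := by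
        rw [mulVec_single]; simp; rfl
      rw [this]
      simp [dotProduct, Pi.single_apply, hc i]
    have h2 := (hX.dotProduct_mulVec_zero_iff (Pi.single i 1)).mp h1
    have h3 : X *ᵥ Pi.single i 1 = fun k => X k i := by rw [mulVec_single]; simp; rfl
    rw [h3] at h2
    have := congrFun h2 j
    have hsym : X i j = X j i := by
      have := congrFun (congrFun hX.isHermitian i) j
      simpa [conjTranspose_apply] using this.symm
    simp [hsym, this]
  obtain ⟨i, hi⟩ := hdiag
  have hd0 : 0 ≤ X i i := by
    have h := hX.dotProduct_mulVec_nonneg (Pi.single i 1)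
    simpa [mulVec_single, dotProduct, Pi.single_apply, mul_comm] using h
  have hd : 0 < X i i := lt_of_le_of_ne hd0 (Ne.symm hi)
  set d := X i i with hdd
  set u : Fin m → ℝ := fun k => X k i with hu
  have humem : u ∈ LinearMap.range X.mulVecLin := by
    refine ⟨Pi.single i 1, ?_⟩
    simp only [mulVecLin_apply, mulVec_single, hu]
    funext k; simp
  have hune : u ≠ 0 := by
    intro h
    exact hi (by simpa [hu] using congrFun h i)
  have hune' : (⟨u, humem⟩ : LinearMap.range X.mulVecLin) ≠ 0 := by
    intro h
    exact hune (congrArg Subtype.val h)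
  have hfr : Module.finrank ℝ (LinearMap.range X.mulVecLin) = 1 := hr
  have hall := (finrank_eq_one_iff_of_nonzero' (⟨u, humem⟩ : LinearMap.range X.mulVecLin) hune').mp hfr
  have hcols : ∀ j, ∃ c : ℝ, ∀ k, c * u k = X k j := by
    intro j
    have hmem : (fun k => X k j) ∈ LinearMap.range X.mulVecLin := by
      refine ⟨Pi.single j 1, ?_⟩
      simp only [mulVecLin_apply, mulVec_single]
      funext k; simp
    obtain ⟨c, hc⟩ := hall ⟨fun k => X k j, hmem⟩
    refine ⟨c, fun k => ?_⟩
    have := congrFun (congrArg Subtype.val hc) k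
    simpa using this
  choose c hc using hcols
  have hsym : ∀ a b, X a b = X b a := by
    intro a b
    have := congrFun (congrFun hX.isHermitian a) b
    simpa [conjTranspose_apply] using this.symm
  have hcj : ∀ j, c j = u j / d := by
    intro j
    have h1 : c j * u i = X i j := hc j i
    have h2 : X i j = u j := by rw [hsym i j]
    field_simp [hdd] at h1 ⊢
    rw [h2] at h1
    linarith [h1]
  refine ⟨fun k => u k / Real.sqrt d, ?_⟩
  ext k j
  rw [vecMulVec_apply]
  have hXkj : X k j = c j * u k := (hc j k).symm
  rw [hXkj, hcj j]
  rw [div_mul_div_comm]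
  rw [Real.mul_self_sqrt (le_of_lt hd)]
  ring

lemma exists_rog_family {m : ℕ} (K : Set (Matrix (Fin m) (Fin m) ℝ)) {M : ℕ}
    (W : Fin M → Matrix (Fin m) (Fin m) ℝ)
    (hmem : ∀ i, W i ≠ 0 → W i ∈ K) (hrk : ∀ i, W i ≠ 0 → (W i).rank = 1) :
    ∃ (N : ℕ) (Y : Fin N → Matrix (Fin m) (Fin m) ℝ),
      (∀ j, Y j ∈ K ∧ (Y j).rank = 1) ∧ ∑ i, W i = ∑ j, Y j := by
  classical
  let s : Finset (Fin M) := Finset.univ.filter (fun i => W i ≠ 0)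
  let e : Fin s.card ≃ {x // x ∈ s} := s.equivFin.symm
  refine ⟨s.card, fun j => W (e j), fun j => ?_, ?_⟩
  · have hWj : W (e j) ≠ 0 := (Finset.mem_filter.mp (e j).2).2
    exact ⟨hmem _ hWj, hrk _ hWj⟩
  · calc ∑ i, W i = ∑ i ∈ s, W i :=
          (Finset.sum_filter_ne_zero Finset.univ (f := W)).symm
    _ = ∑ a : {x // x ∈ s}, W a := (Finset.sum_coe_sort s W).symm
    _ = ∑ j : Fin s.card, W (e j) := (Equiv.sum_comp e (fun a : {x // x ∈ s} => W a)).symm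

end RogHelpers

theorem stmt_12 {n n' : ℕ} (hn : n' < n)
    (P : Matrix (Fin n') (Fin n) ℝ) (hP : P.rank = n')
    (L' : Submodule ℝ (Matrix (Fin n') (Fin n') ℝ))
    (K' : Set (Matrix (Fin n') (Fin n') ℝ))
    (hK' : K' = {X | X ∈ L' ∧ X.PosSemidef})
    (K : Set (Matrix (Fin n) (Fin n) ℝ))
    (hK : K = {X | X.PosSemidef ∧ P * X * Pᵀ ∈ K'}) :
    IsROG K ↔ IsROG K' := by
  subst hK hK'
  have h0K' : (0 : Matrix (Fin n') (Fin n') ℝ) ∈ {X | X ∈ L' ∧ X.PosSemidef} :=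
    ⟨L'.zero_mem, Matrix.PosSemidef.zero⟩
  constructor
  · -- K ROG → K' ROG
    intro hrog X' hX'
    obtain ⟨hX'L, hX'psd⟩ := hX'
    -- a right inverse of P
    have hsurj : LinearMap.range P.mulVecLin = ⊤ := by
      apply Submodule.eq_top_of_finrank_eq
      rw [Module.finrank_fin_fun]
      exact hP
    obtain ⟨g, hg⟩ := LinearMap.exists_rightInverse_of_surjective P.mulVecLin hsurj
    set G : Matrix (Fin n) (Fin n') ℝ := Matrix.toLin'.symm g with hG
    have hGg : G.mulVecLin = g := by
      apply LinearMap.ext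
      intro v
      have : Matrix.toLin' G = g := Matrix.toLin'.apply_symm_apply g
      rw [← this, Matrix.toLin'_apply, Matrix.mulVecLin_apply]
    have hPG : P * G = 1 := by
      have h1 : (P * G).mulVecLin = (1 : Matrix (Fin n') (Fin n') ℝ).mulVecLin := by
        rw [Matrix.mulVecLin_mul, hGg, hg, Matrix.mulVecLin_one]
      ext i j
      have := congrFun (congrArg (fun f => f (Pi.single j 1))
        (congrArg DFunLike.coe h1)) i
      simpa [Matrix.mulVecLin_apply, Matrix.mulVec_single, Matrix.mul_apply,
        Matrix.mulVec, dotProduct, Matrix.one_apply, Pi.single_apply,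
        eq_comm] using this
    set X : Matrix (Fin n) (Fin n) ℝ := G * X' * Gᵀ with hXdef
    have hGtPt : Gᵀ * Pᵀ = 1 := by
      rw [← transpose_mul, hPG, transpose_one]
    have hPXP : P * X * Pᵀ = X' := by
      rw [hXdef]
      simp only [Matrix.mul_assoc]
      rw [hGtPt, Matrix.mul_one, ← Matrix.mul_assoc, hPG, Matrix.one_mul]
    have hXpsd : X.PosSemidef := by
      have := hX'psd.mul_mul_conjTranspose_same G
      rwa [conjTranspose_eq_transpose_of_trivial] at this
    have hXK : X ∈ {X | X.PosSemidef ∧ P * X * Pᵀ ∈ {X | X ∈ L' ∧ X.PosSemidef}} := by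
      refine ⟨hXpsd, ?_⟩
      rw [hPXP]
      exact ⟨hX'L, hX'psd⟩
    obtain ⟨N, Z, hZ, hXsum⟩ := hrog X hXK
    set W : Fin N → Matrix (Fin n') (Fin n') ℝ := fun i => P * Z i * Pᵀ with hW
    have hX'eq : X' = ∑ i, W i := by
      rw [← hPXP, hXsum, Matrix.mul_sum, Matrix.sum_mul]
    obtain ⟨N', Y, hY, hsum'⟩ := exists_rog_family {X | X ∈ L' ∧ X.PosSemidef} W
      (fun i _ => (hZ i).1.2)
      (fun i hne => by
        have hle : (W i).rank ≤ 1 := by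
          calc (W i).rank = ((P * Z i) * Pᵀ).rank := rfl
          _ ≤ (P * Z i).rank := rank_mul_le_left _ _
          _ ≤ (Z i).rank := rank_mul_le_right _ _
          _ = 1 := (hZ i).2
        have hne0 : (W i).rank ≠ 0 := fun h => hne (myrank_eq_zero_iff.mp h)
        omega)
    exact ⟨N', Y, hY, by rw [hX'eq, hsum']⟩
  · -- K' ROG → K ROG
    intro hrog X hX
    obtain ⟨hXpsd, hPXK'⟩ := hX
    obtain ⟨N, Y, hY, hsum⟩ := hrog _ hPXK'
    have hYpsd : ∀ i, (Y i).PosSemidef := fun i => (hY i).1.2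
    choose y hy using fun i => rank_one_psd (hYpsd i) (hY i).2
    obtain ⟨C0, hC0⟩ := posSemidef_iff_eq_transpose_mul_self.mp hXpsd
    rw [conjTranspose_eq_transpose_of_trivial] at hC0
    set E : Matrix (Fin N) (Fin n') ℝ := Matrix.of (fun i a => y i a) with hE
    have hEi : ∀ i, E i = y i := fun i => rfl
    have hEE : Eᵀ * E = P * X * Pᵀ := by
      rw [transpose_mul_self_eq_sum, hsum]
      exact Finset.sum_congr rfl fun i _ => by rw [hEi, ← hy i]
    set Bm : Matrix (Fin n') (Fin n) ℝ := P * C0ᵀ with hBm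
    have hBmt : Bmᵀ = C0 * Pᵀ := by
      rw [hBm, transpose_mul, transpose_transpose]
    have hBB : Bm * Bmᵀ = Eᵀ * (Eᵀ)ᵀ := by
      rw [transpose_transpose, hEE, hBmt, hBm, hC0]
      simp only [Matrix.mul_assoc]
    obtain ⟨Q, hQ1, hQ2⟩ := exists_contraction Bm Eᵀ hBB
    set F : Matrix (Fin N) (Fin n) ℝ := Qᵀ * C0 with hF
    have hFP : F * Pᵀ = E := by
      rw [hF, Matrix.mul_assoc, ← hBmt, ← transpose_mul, hQ1, transpose_transpose]
    have hPF : ∀ i, P *ᵥ F i = y i := by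
      intro i
      funext a
      have h1 : (F * Pᵀ) i a = y i a := by rw [hFP]; rfl
      rw [← h1]
      simp only [Matrix.mul_apply, Matrix.mulVec, dotProduct, transpose_apply]
      exact Finset.sum_congr rfl fun b _ => mul_comm _ _
    set R : Matrix (Fin n) (Fin n) ℝ := X - Fᵀ * F with hRdef
    have hFt : Fᵀ = C0ᵀ * Q := by rw [hF, transpose_mul, transpose_transpose]
    have hR : R = C0ᵀ * (1 - Q * Qᵀ) * C0 := by
      have h2 : C0ᵀ * (1 - Q * Qᵀ) * C0 = C0ᵀ * C0 - C0ᵀ * Q * (Qᵀ * C0) := by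
        rw [Matrix.mul_sub, Matrix.mul_one, Matrix.sub_mul]
        simp only [Matrix.mul_assoc]
      rw [hRdef, h2, ← hC0, hFt, hF, Matrix.mul_assoc]
    have hRpsd : R.PosSemidef := by
      rw [hR]
      have := hQ2.conjTranspose_mul_mul_same C0
      rwa [conjTranspose_eq_transpose_of_trivial] at this
    obtain ⟨r, hrdec⟩ := psd_decomp hRpsd
    have hPFFP : P * (Fᵀ * F) * Pᵀ = Eᵀ * E := by
      have h3 : Eᵀ = P * Fᵀ := by rw [← hFP, transpose_mul, transpose_transpose]
      rw [h3, ← hFP]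
      simp only [Matrix.mul_assoc]
    have hPRP : P * R * Pᵀ = 0 := by
      rw [hRdef, Matrix.mul_sub, Matrix.sub_mul, hPFFP, hEE, sub_self]
    have hsum0 : ∑ a, vecMulVec (P *ᵥ r a) (P *ᵥ r a) = 0 := by
      rw [← hPRP, hrdec, Matrix.mul_sum, Matrix.sum_mul]
      exact Finset.sum_congr rfl fun a _ => (mul_vecMulVec_mul_s12 P (r a) (r a)).symm
    have hPr : ∀ a, P *ᵥ r a = 0 := by
      intro a
      funext t
      have h4 : ∑ b, ((P *ᵥ r b) t) * ((P *ᵥ r b) t) = 0 := by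
        have h5 := congrFun (congrFun hsum0 t) t
        rw [Matrix.sum_apply] at h5
        simpa [vecMulVec_apply] using h5
      have h6 := (Finset.sum_eq_zero_iff_of_nonneg
        (fun b _ => mul_self_nonneg ((P *ᵥ r b) t))).mp h4 a (Finset.mem_univ a)
      have := mul_self_eq_zero.mp h6
      simpa using this
    -- assemble
    set w : Fin (N + n) → (Fin n → ℝ) := Fin.append (fun i => F i) r with hw
    set W : Fin (N + n) → Matrix (Fin n) (Fin n) ℝ := fun j => vecMulVec (w j) (w j) with hWdef
    have hXW : X = ∑ j, W j := by
      have hXd : X = Fᵀ * F + R := by rw [hRdef]; abel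
      rw [Fin.sum_univ_add (f := W)]
      have hl : ∀ i : Fin N, W (Fin.castAdd n i) = vecMulVec (F i) (F i) := by
        intro i; simp only [hWdef, hw, Fin.append_left]
      have hrr : ∀ a : Fin n, W (Fin.natAdd N a) = vecMulVec (r a) (r a) := by
        intro a; simp only [hWdef, hw, Fin.append_right]
      calc X = Fᵀ * F + R := hXd
      _ = (∑ i, vecMulVec (F i) (F i)) + ∑ a, vecMulVec (r a) (r a) := by
          rw [transpose_mul_self_eq_sum, hrdec]
      _ = (∑ i, W (Fin.castAdd n i)) + ∑ a, W (Fin.natAdd N a) := by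
          rw [Finset.sum_congr rfl fun i _ => (hl i).symm,
            Finset.sum_congr rfl fun a _ => (hrr a).symm]
    have hmemW : ∀ j, W j ∈ {X | X.PosSemidef ∧ P * X * Pᵀ ∈ {X | X ∈ L' ∧ X.PosSemidef}} := by
      intro j
      refine ⟨posSemidef_vecMulVec_s12 _, ?_⟩
      rw [hWdef]
      show P * vecMulVec (w j) (w j) * Pᵀ ∈ _
      rw [mul_vecMulVec_mul_s12]
      refine Fin.addCases (fun i => ?_) (fun a => ?_) j
      · have : w (Fin.castAdd n i) = F i := Fin.append_left _ _ i
        rw [this, hPF i, ← hy i]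
        exact (hY i).1
      · have : w (Fin.natAdd N a) = r a := Fin.append_right _ _ a
        rw [this, hPr a]
        have hzz : vecMulVec (0 : Fin n' → ℝ) (0 : Fin n' → ℝ) = (0 : Matrix (Fin n') (Fin n') ℝ) := by
          ext s t; simp [vecMulVec_apply]
        rw [hzz]
        exact h0K'
    obtain ⟨N', Y', hY', hsum'⟩ := exists_rog_family
      {X | X.PosSemidef ∧ P * X * Pᵀ ∈ {X | X ∈ L' ∧ X.PosSemidef}} W
      (fun j _ => hmemW j)
      (fun j hne => by
        have hle : (W j).rank ≤ 1 := _root_.rank_vecMulVec_le _ _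
        have hne0 : (W j).rank ≠ 0 := fun h => hne (myrank_eq_zero_iff.mp h)
        omega)
    exact ⟨N', Y', hY', by rw [hXW, hsum']⟩
end

section
/- Let M be a real symmetric positive semidefinite matrix with 3×3 block structure M = [[A, B, 0], [Bᵀ, C, D], [0, Dᵀ, E]], where A, C, E are square diagonal blocks (of sizes p×p, q×q, r×r) and the upper-right p×r block of M is zero. Then there exist symmetric q×q matrices C₁ and C₂ with C₁ + C₂ = C such that both block matrices [[A, B], [Bᵀ, C₁]] and [[C₂, D], [Dᵀ, E]] are positive semidefinite. -/
open Matrix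

private lemma coef_zero {c d : ℝ} (h : ∀ t : ℝ, 0 ≤ t * c + d) : c = 0 := by
  by_contra hc
  have := h (-(d + 1) / c)
  rw [div_mul_cancel₀ _ hc] at this
  linarith

private lemma exists_factor {p q : ℕ} (A : Matrix (Fin p) (Fin p) ℝ)
    (B : Matrix (Fin p) (Fin q) ℝ) (hA : Aᵀ = A)
    (hker : ∀ u, A *ᵥ u = 0 → Bᵀ *ᵥ u = 0) :
    ∃ H : Matrix (Fin p) (Fin q) ℝ, A * H = B := by
  have hdisj : LinearMap.range A.mulVecLin ⊓ LinearMap.ker A.mulVecLin = ⊥ := by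
    rw [Submodule.eq_bot_iff]
    rintro x ⟨⟨w, rfl⟩, hk⟩
    simp only [SetLike.mem_coe, LinearMap.mem_ker, mulVecLin_apply] at hk
    rw [mulVecLin_apply, ← dotProduct_self_eq_zero (R := ℝ)]
    calc (A *ᵥ w) ⬝ᵥ (A *ᵥ w) = w ⬝ᵥ (Aᵀ *ᵥ (A *ᵥ w)) := by
          rw [dotProduct_mulVec, mulVec_transpose]
          exact (dotProduct_comm _ _)
      _ = 0 := by rw [hA, hk]; simp
  have hsup : LinearMap.range A.mulVecLin ⊔ LinearMap.ker A.mulVecLin = ⊤ := by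
    apply Submodule.eq_top_of_finrank_eq
    have h1 := Submodule.finrank_sup_add_finrank_inf_eq (LinearMap.range A.mulVecLin)
      (LinearMap.ker A.mulVecLin)
    have h2 := LinearMap.finrank_range_add_finrank_ker A.mulVecLin
    rw [hdisj] at h1
    simp at h1
    rw [h1, h2]
  have hcol : ∀ j, ∃ v, A *ᵥ v = fun i => B i j := by
    intro j
    have hmem : (fun i => B i j) ∈ LinearMap.range A.mulVecLin ⊔ LinearMap.ker A.mulVecLin := by
      rw [hsup]; trivial
    obtain ⟨a, ha, k, hk, hak⟩ := Submodule.mem_sup.mp hmem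
    obtain ⟨w, hw⟩ := ha
    rw [LinearMap.mem_ker, mulVecLin_apply] at hk
    have hk0 : k = 0 := by
      rw [← dotProduct_self_eq_zero (R := ℝ)]
      have h1 : (fun i => B i j) ⬝ᵥ k = 0 := by
        have hb := hker k hk
        have : ((fun i => B i j) : Fin p → ℝ) ⬝ᵥ k = (Bᵀ *ᵥ k) j := by
          simp [mulVec, dotProduct, transpose_apply, mul_comm]
        rw [this, hb]; rfl
      have h2 : a ⬝ᵥ k = 0 := by
        rw [← hw, mulVecLin_apply, dotProduct_comm, dotProduct_mulVec, ← hA,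
          vecMul_transpose, hk, zero_dotProduct]
      have : k ⬝ᵥ k = (fun i => B i j) ⬝ᵥ k - a ⬝ᵥ k := by
        rw [← hak]; simp [add_dotProduct]
      rw [this, h1, h2]; ring
    refine ⟨w, ?_⟩
    rw [← mulVecLin_apply, hw, ← hak, hk0, add_zero]
  choose H hH using hcol
  refine ⟨(fun i j => H j i), ?_⟩
  ext i j
  have := congrFun (hH j) i
  change ∑ k, A i k * H j k = B i j
  simpa [Matrix.mul_apply, mulVec, dotProduct] using this

theorem stmt_13 {p q r : ℕ}
    (A : Matrix (Fin p) (Fin p) ℝ) (B : Matrix (Fin p) (Fin q) ℝ)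
    (C : Matrix (Fin q) (Fin q) ℝ) (D : Matrix (Fin q) (Fin r) ℝ)
    (E : Matrix (Fin r) (Fin r) ℝ)
    (hM : (Matrix.fromBlocks A (Matrix.fromCols B (0 : Matrix (Fin p) (Fin r) ℝ))
        (Matrix.fromRows Bᵀ (0 : Matrix (Fin r) (Fin p) ℝ))
        (Matrix.fromBlocks C D Dᵀ E)).PosSemidef) :
    ∃ C₁ C₂ : Matrix (Fin q) (Fin q) ℝ, C₁.IsSymm ∧ C₂.IsSymm ∧ C₁ + C₂ = C ∧
      (Matrix.fromBlocks A B Bᵀ C₁).PosSemidef ∧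
      (Matrix.fromBlocks C₂ D Dᵀ E).PosSemidef := by
  -- symmetry facts
  have hMsymm := hM.1
  rw [isHermitian_fromBlocks_iff] at hMsymm
  obtain ⟨hAh, -, -, hM'h⟩ := hMsymm
  rw [isHermitian_fromBlocks_iff] at hM'h
  obtain ⟨hCh, -, -, hEh⟩ := hM'h
  have hA : Aᵀ = A := hAh
  have hC : Cᵀ = C := hCh
  have hE : Eᵀ = E := hEh
  -- quadratic form
  have hform : ∀ (u : Fin p → ℝ) (y : Fin q → ℝ) (z : Fin r → ℝ),
      0 ≤ u ⬝ᵥ (A *ᵥ u) + u ⬝ᵥ (B *ᵥ y) + y ⬝ᵥ (Bᵀ *ᵥ u) + y ⬝ᵥ (C *ᵥ y)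
        + y ⬝ᵥ (D *ᵥ z) + z ⬝ᵥ (Dᵀ *ᵥ y) + z ⬝ᵥ (E *ᵥ z) := by
    intro u y z
    have h := hM.dotProduct_mulVec_nonneg (Sum.elim u (Sum.elim y z))
    simpa [fromBlocks_mulVec, fromCols_mulVec_sumElim, fromRows_mulVec,
      sumElim_dotProduct_sumElim, dotProduct_add, add_assoc] using h
  have hBsymm : ∀ (u : Fin p → ℝ) (y : Fin q → ℝ), y ⬝ᵥ (Bᵀ *ᵥ u) = u ⬝ᵥ (B *ᵥ y) := by
    intro u y
    rw [dotProduct_mulVec, vecMul_transpose, dotProduct_comm]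
  have hAsymm : ∀ (u v : Fin p → ℝ), v ⬝ᵥ (A *ᵥ u) = u ⬝ᵥ (A *ᵥ v) := by
    intro u v
    conv_lhs => rw [← hA]
    rw [dotProduct_mulVec, vecMul_transpose, dotProduct_comm]
  have hApsd : ∀ w, 0 ≤ w ⬝ᵥ (A *ᵥ w) := by
    intro w
    have := hform w 0 0
    simpa using this
  -- kernel condition
  have hker : ∀ u, A *ᵥ u = 0 → Bᵀ *ᵥ u = 0 := by
    intro u hu
    have h1 : ∀ y, u ⬝ᵥ (B *ᵥ y) = 0 := by
      intro y
      have h2X : (2 : ℝ) * (u ⬝ᵥ (B *ᵥ y)) = 0 := by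
        apply coef_zero (d := y ⬝ᵥ (C *ᵥ y))
        intro t
        have h := hform (t • u) y 0
        simp only [mulVec_smul, hu, smul_zero, dotProduct_zero, zero_dotProduct,
          Matrix.mulVec_zero, add_zero, hBsymm, smul_dotProduct, dotProduct_smul,
          smul_eq_mul] at h
        nlinarith [h]
      linarith
    have h2 := h1 (Bᵀ *ᵥ u)
    rw [dotProduct_mulVec, ← mulVec_transpose] at h2
    exact dotProduct_self_eq_zero.mp h2
  obtain ⟨H, hH⟩ := exists_factor A B hA hker
  refine ⟨Hᵀ * A * H, C - Hᵀ * A * H, ?_, ?_, by abel, ?_, ?_⟩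
  · show (Hᵀ * A * H)ᵀ = _
    rw [Matrix.transpose_mul, Matrix.transpose_mul, transpose_transpose, hA, Matrix.mul_assoc]
  · show (C - Hᵀ * A * H)ᵀ = _
    rw [Matrix.transpose_sub, hC, Matrix.transpose_mul, Matrix.transpose_mul,
      transpose_transpose, hA, Matrix.mul_assoc]
  · -- first block matrix PSD
    have hBv : ∀ y, B *ᵥ y = A *ᵥ (H *ᵥ y) := by
      intro y
      rw [← hH, ← mulVec_mulVec]
    have hC₁ : ∀ y : Fin q → ℝ, y ⬝ᵥ ((Hᵀ * A * H) *ᵥ y) = (H *ᵥ y) ⬝ᵥ (A *ᵥ (H *ᵥ y)) := by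
      intro y
      rw [Matrix.mul_assoc, ← mulVec_mulVec, dotProduct_mulVec, vecMul_transpose,
        ← mulVec_mulVec]
    rw [posSemidef_iff_dotProduct_mulVec]
    constructor
    · rw [isHermitian_fromBlocks_iff]
      refine ⟨hAh, rfl, by ext i j; simp, ?_⟩
      show (Hᵀ * A * H)ᵀ = _
      rw [Matrix.transpose_mul, Matrix.transpose_mul, transpose_transpose, hA, Matrix.mul_assoc]
    · intro x
      have hx : Sum.elim (x ∘ Sum.inl) (x ∘ Sum.inr) = x := Sum.elim_comp_inl_inr x
      set u := x ∘ Sum.inl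
      set y := x ∘ Sum.inr
      rw [← hx]
      set v := H *ᵥ y with hv
      have expand : star (Sum.elim u y) ⬝ᵥ ((fromBlocks A B Bᵀ (Hᵀ * A * H)) *ᵥ Sum.elim u y)
          = u ⬝ᵥ (A *ᵥ u) + u ⬝ᵥ (B *ᵥ y) + y ⬝ᵥ (Bᵀ *ᵥ u) + y ⬝ᵥ ((Hᵀ * A * H) *ᵥ y) := by
        simp [fromBlocks_mulVec, sumElim_dotProduct_sumElim, dotProduct_add]
        ring
      rw [expand, hC₁, hBsymm, hBv]
      have key := hApsd (u + v)
      rw [mulVec_add, dotProduct_add, add_dotProduct, add_dotProduct] at key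
      have := hAsymm u v
      linarith
  · rw [posSemidef_iff_dotProduct_mulVec]
    constructor
    · rw [isHermitian_fromBlocks_iff]
      refine ⟨?_, rfl, by ext i j; simp, hEh⟩
      show (C - Hᵀ * A * H)ᵀ = _
      rw [Matrix.transpose_sub, hC, Matrix.transpose_mul, Matrix.transpose_mul,
        transpose_transpose, hA, Matrix.mul_assoc]
    · intro x
      have hx : Sum.elim (x ∘ Sum.inl) (x ∘ Sum.inr) = x := Sum.elim_comp_inl_inr x
      set y := x ∘ Sum.inl
      set z := x ∘ Sum.inr
      rw [← hx]
      set v := H *ᵥ y with hv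
      have hBv : B *ᵥ y = A *ᵥ v := by rw [← hH, ← mulVec_mulVec]
      have hC₁ : y ⬝ᵥ ((Hᵀ * A * H) *ᵥ y) = v ⬝ᵥ (A *ᵥ v) := by
        rw [Matrix.mul_assoc, ← mulVec_mulVec, dotProduct_mulVec, vecMul_transpose,
          ← mulVec_mulVec]
      have expand : star (Sum.elim y z) ⬝ᵥ ((fromBlocks (C - Hᵀ * A * H) D Dᵀ E) *ᵥ Sum.elim y z)
          = y ⬝ᵥ (C *ᵥ y) - y ⬝ᵥ ((Hᵀ * A * H) *ᵥ y) + y ⬝ᵥ (D *ᵥ z) + z ⬝ᵥ (Dᵀ *ᵥ y)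
            + z ⬝ᵥ (E *ᵥ z) := by
        simp [fromBlocks_mulVec, sumElim_dotProduct_sumElim, dotProduct_add,
          Matrix.sub_mulVec, dotProduct_sub]
        ring
      rw [expand, hC₁]
      have key := hform (-v) y z
      have e1 : (-v) ⬝ᵥ (A *ᵥ (-v)) = v ⬝ᵥ (A *ᵥ v) := by
        rw [neg_dotProduct, mulVec_neg, dotProduct_neg, neg_neg]
      have e2 : (-v) ⬝ᵥ (B *ᵥ y) = -(v ⬝ᵥ (A *ᵥ v)) := by rw [neg_dotProduct, hBv]
      have e3 : y ⬝ᵥ (Bᵀ *ᵥ (-v)) = -(v ⬝ᵥ (A *ᵥ v)) := by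
        rw [hBsymm]; exact e2
      rw [e1, e2, e3] at key
      linarith
end

section
/- Let L ⊆ Sⁿ be a linear subspace of dimension n(n+1)/2 − d and let K = L ∩ S₊ⁿ. If a nonzero matrix X ∈ K generates an extreme ray of K and k = rank X, then k(k+1) ≤ 2(d+1); in particular K has no extreme elements of rank k > −1/2 + √(1/4 + 2(d+1)). -/
open Matrix

section Aux

variable {n : ℕ}

/-- Symmetric `n × n` real matrices supported on `s × s`. -/
def symOn (n : ℕ) (s : Finset (Fin n)) : Submodule ℝ (Matrix (Fin n) (Fin n) ℝ) where
  carrier := {Y | Y.IsSymm ∧ ∀ i j, (i ∉ s ∨ j ∉ s) → Y i j = 0}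
  add_mem' := fun {a b} ha hb => ⟨ha.1.add hb.1, fun i j h => by
    simp [Matrix.add_apply, ha.2 i j h, hb.2 i j h]⟩
  zero_mem' := ⟨Matrix.isSymm_zero, fun i j _ => rfl⟩
  smul_mem' := fun c {Y} hY => ⟨hY.1.smul c, fun i j h => by
    simp [Matrix.smul_apply, hY.2 i j h]⟩

lemma mem_symOn {s : Finset (Fin n)} {Y : Matrix (Fin n) (Fin n) ℝ} :
    Y ∈ symOn n s ↔ Y.IsSymm ∧ ∀ i j, (i ∉ s ∨ j ∉ s) → Y i j = 0 := Iff.rfl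

/-- A symmetric matrix supported on `s × s` is determined by a function on `Sym2 s`. -/
noncomputable def symOnEquiv (n : ℕ) (s : Finset (Fin n)) :
    symOn n s ≃ₗ[ℝ] (Sym2 {x : Fin n // x ∈ s} → ℝ) where
  toFun Y := Sym2.lift ⟨fun a b => (Y : Matrix (Fin n) (Fin n) ℝ) a b,
    fun a b => (Y.2.1.apply (b : Fin n) a)⟩
  map_add' Y Z := by
    funext p
    induction p using Sym2.ind with
    | _ a b => simp
  map_smul' c Y := by
    funext p
    induction p using Sym2.ind with
    | _ a b => simp
  invFun f := ⟨Matrix.of fun i j =>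
      if h : i ∈ s ∧ j ∈ s then f s(⟨i, h.1⟩, ⟨j, h.2⟩) else 0, by
    constructor
    · apply Matrix.IsSymm.ext
      intro i j
      by_cases h : i ∈ s ∧ j ∈ s
      · rw [Matrix.of_apply, Matrix.of_apply, dif_pos ⟨h.2, h.1⟩, dif_pos h, Sym2.eq_swap]
      · rw [Matrix.of_apply, Matrix.of_apply, dif_neg (by tauto), dif_neg h]
    · intro i j h
      rw [Matrix.of_apply, dif_neg (by tauto)]⟩
  left_inv Y := by
    apply Subtype.ext
    funext i j
    show (if h : i ∈ s ∧ j ∈ s then _ else 0) = _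
    by_cases h : i ∈ s ∧ j ∈ s
    · rw [dif_pos h]; rfl
    · rw [dif_neg h]
      exact (Y.2.2 i j (not_and_or.mp h)).symm
  right_inv f := by
    funext p
    induction p using Sym2.ind with
    | _ a b =>
      show (if h : (↑a : Fin n) ∈ s ∧ (↑b : Fin n) ∈ s
        then f s(⟨↑a, h.1⟩, ⟨↑b, h.2⟩) else 0) = f s(a, b)
      rw [dif_pos ⟨a.2, b.2⟩]

lemma finrank_symOn (s : Finset (Fin n)) :
    Module.finrank ℝ (symOn n s) = (s.card + 1).choose 2 := by
  rw [(symOnEquiv n s).finrank_eq, Module.finrank_fintype_fun_eq_card, Sym2.card,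
    Fintype.card_coe]

lemma isHermitian_of_isSymm {A : Matrix (Fin n) (Fin n) ℝ} (h : A.IsSymm) : A.IsHermitian := by
  rw [Matrix.IsHermitian, Matrix.conjTranspose_eq_transpose_of_trivial]; exact h

lemma psd_smul {M : Matrix (Fin n) (Fin n) ℝ} (h : M.PosSemidef) {c : ℝ} (hc : 0 ≤ c) :
    (c • M).PosSemidef := by
  have hs : M.IsSymm := by
    rw [Matrix.IsSymm, ← Matrix.conjTranspose_eq_transpose_of_trivial]; exact h.1
  apply Matrix.PosSemidef.of_dotProduct_mulVec_nonneg
  · exact isHermitian_of_isSymm (hs.smul c)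
  · intro x
    rw [Matrix.smul_mulVec, dotProduct_smul]
    exact mul_nonneg hc (h.dotProduct_mulVec_nonneg x)

/-- Perturbation: if `Y` is symmetric and supported on the support of a nonnegative `μ`,
then `diagonal μ ± t • Y` is PSD for small `t > 0`. -/
lemma perturb (μ : Fin n → ℝ) (hμ : ∀ i, 0 ≤ μ i)
    (Y : Matrix (Fin n) (Fin n) ℝ) (hYs : Y.IsSymm)
    (hsupp : ∀ i j, (μ i = 0 ∨ μ j = 0) → Y i j = 0) :
    ∃ t : ℝ, 0 < t ∧ (Matrix.diagonal μ + t • Y).PosSemidef ∧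
      (Matrix.diagonal μ - t • Y).PosSemidef := by
  classical
  set s : Finset (Fin n) := Finset.univ.filter (fun i => μ i ≠ 0) with hs
  set C : ℝ := ∑ i, ∑ j, |Y i j| with hC
  have hC0 : 0 ≤ C := Finset.sum_nonneg fun i _ => Finset.sum_nonneg fun j _ => abs_nonneg _
  obtain ⟨lam, hlam0, hlamle⟩ : ∃ lam : ℝ, 0 < lam ∧ ∀ i, μ i ≠ 0 → lam ≤ μ i := by
    by_cases hne : s.Nonempty
    · obtain ⟨i0, hi0, heq⟩ := Finset.exists_mem_eq_inf' hne μ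
      refine ⟨s.inf' hne μ, ?_, ?_⟩
      · rw [heq]
        exact lt_of_le_of_ne (hμ i0) (Ne.symm (Finset.mem_filter.mp hi0).2)
      · intro i hi
        exact Finset.inf'_le μ (by simp [hs, hi])
    · exact ⟨1, one_pos, fun i hi => absurd ⟨i, by simp [hs, hi]⟩ hne⟩
  set t : ℝ := lam / (C + 1) with ht
  have ht0 : 0 < t := div_pos hlam0 (by linarith)
  have htC : t * C ≤ lam := by
    rw [ht, div_mul_eq_mul_div, div_le_iff₀ (by linarith)]
    nlinarith
  have key : ∀ ε : ℝ, |ε| ≤ t → (Matrix.diagonal μ + ε • Y).PosSemidef := by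
    intro ε hε
    apply Matrix.PosSemidef.of_dotProduct_mulVec_nonneg
    · exact isHermitian_of_isSymm ((Matrix.isSymm_diagonal μ).add (hYs.smul ε))
    · intro v
      have hsv : star v = v := by simp
      set S : ℝ := ∑ i ∈ s, v i ^ 2 with hS
      have hS0 : 0 ≤ S := Finset.sum_nonneg fun i _ => sq_nonneg _
      have hsq : ∀ i ∈ s, v i ^ 2 ≤ S := fun i hi =>
        Finset.single_le_sum (fun j _ => sq_nonneg (v j)) hi
      have expand : dotProduct (star v) ((Matrix.diagonal μ + ε • Y) *ᵥ v)
          = (∑ i, μ i * v i ^ 2) + ε * ∑ i, v i * ∑ j, Y i j * v j := by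
        have e1 : dotProduct v (Matrix.diagonal μ *ᵥ v) = ∑ i, μ i * v i ^ 2 := by
          simp only [dotProduct, Matrix.mulVec_diagonal]
          exact Finset.sum_congr rfl fun i _ => by ring
        have e2 : dotProduct v (Y *ᵥ v) = ∑ i, v i * ∑ j, Y i j * v j := rfl
        rw [hsv, Matrix.add_mulVec, dotProduct_add, Matrix.smul_mulVec, dotProduct_smul,
          e1, e2, smul_eq_mul]
      have hdiag : lam * S ≤ ∑ i, μ i * v i ^ 2 := by
        have h1 : ∑ i ∈ s, lam * v i ^ 2 ≤ ∑ i ∈ s, μ i * v i ^ 2 :=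
          Finset.sum_le_sum fun i hi =>
            mul_le_mul_of_nonneg_right (hlamle i (Finset.mem_filter.mp hi).2) (sq_nonneg _)
        have h2 : ∑ i ∈ s, μ i * v i ^ 2 ≤ ∑ i, μ i * v i ^ 2 :=
          Finset.sum_le_sum_of_subset_of_nonneg (Finset.subset_univ s)
            (fun i _ _ => mul_nonneg (hμ i) (sq_nonneg _))
        rw [← Finset.mul_sum] at h1
        linarith
      have hterm : ∀ i j, |v i * (Y i j * v j)| ≤ |Y i j| * S := by
        intro i j
        by_cases h0 : Y i j = 0
        · simp [h0]
        · have hi : i ∈ s := by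
            simp only [hs, Finset.mem_filter, Finset.mem_univ, true_and]
            exact fun h => h0 (hsupp i j (Or.inl h))
          have hj : j ∈ s := by
            simp only [hs, Finset.mem_filter, Finset.mem_univ, true_and]
            exact fun h => h0 (hsupp i j (Or.inr h))
          have h1 := hsq i hi
          have h2 := hsq j hj
          have hvv : |v i * v j| ≤ S := by
            rw [abs_mul]
            nlinarith [abs_nonneg (v i), abs_nonneg (v j), sq_abs (v i), sq_abs (v j),
              sq_nonneg (|v i| - |v j|)]
          calc |v i * (Y i j * v j)| = |Y i j| * |v i * v j| := by
                rw [show v i * (Y i j * v j) = Y i j * (v i * v j) by ring, abs_mul]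
            _ ≤ |Y i j| * S := mul_le_mul_of_nonneg_left hvv (abs_nonneg _)
      have hquad : |∑ i, v i * ∑ j, Y i j * v j| ≤ C * S := by
        calc |∑ i, v i * ∑ j, Y i j * v j| = |∑ i, ∑ j, v i * (Y i j * v j)| := by
              congr 1
              exact Finset.sum_congr rfl fun i _ => Finset.mul_sum _ _ _
          _ ≤ ∑ i, |∑ j, v i * (Y i j * v j)| := Finset.abs_sum_le_sum_abs _ _
          _ ≤ ∑ i, ∑ j, |v i * (Y i j * v j)| :=
              Finset.sum_le_sum fun i _ => Finset.abs_sum_le_sum_abs _ _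
          _ ≤ ∑ i, ∑ j, |Y i j| * S :=
              Finset.sum_le_sum fun i _ => Finset.sum_le_sum fun j _ => hterm i j
          _ = C * S := by
              rw [hC, Finset.sum_mul]
              exact Finset.sum_congr rfl fun i _ => (Finset.sum_mul _ _ _).symm
      rw [expand]
      have habs : |ε * ∑ i, v i * ∑ j, Y i j * v j| ≤ t * (C * S) := by
        rw [abs_mul]
        exact mul_le_mul hε hquad (abs_nonneg _) (le_of_lt ht0)
      have h3 : -(t * (C * S)) ≤ ε * ∑ i, v i * ∑ j, Y i j * v j := by
        have := neg_abs_le (ε * ∑ i, v i * ∑ j, Y i j * v j)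
        linarith
      have h4 : t * (C * S) ≤ lam * S := by
        rw [← mul_assoc]
        exact mul_le_mul_of_nonneg_right htC hS0
      linarith
  refine ⟨t, ht0, key t (by rw [abs_of_pos ht0]), ?_⟩
  have := key (-t) (by rw [abs_neg, abs_of_pos ht0])
  rwa [neg_smul, ← sub_eq_add_neg] at this

/-- Conjugation by a unitary matrix as a linear equivalence. -/
noncomputable def conjE (Q : Matrix (Fin n) (Fin n) ℝ) (hQ1 : Q * star Q = 1) (hQ1' : star Q * Q = 1) :
    Matrix (Fin n) (Fin n) ℝ ≃ₗ[ℝ] Matrix (Fin n) (Fin n) ℝ where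
  toFun M := star Q * M * Q
  map_add' a b := by
    show star Q * (a + b) * Q = star Q * a * Q + star Q * b * Q
    rw [Matrix.mul_add, Matrix.add_mul]
  map_smul' c a := by
    show star Q * (c • a) * Q = c • (star Q * a * Q)
    rw [Matrix.mul_smul, Matrix.smul_mul]
  invFun M := Q * M * star Q
  left_inv M := by
    show Q * (star Q * M * Q) * star Q = M
    simp only [Matrix.mul_assoc]
    rw [hQ1, Matrix.mul_one, ← Matrix.mul_assoc, hQ1, Matrix.one_mul]
  right_inv M := by
    show star Q * (Q * M * star Q) * Q = M
    simp only [Matrix.mul_assoc]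
    rw [hQ1', Matrix.mul_one, ← Matrix.mul_assoc, hQ1', Matrix.one_mul]

lemma isSymm_conj {Q M : Matrix (Fin n) (Fin n) ℝ} (h : M.IsSymm) :
    (star Q * M * Q).IsSymm := by
  have hq : star Q = Qᵀ := by
    rw [Matrix.star_eq_conjTranspose, Matrix.conjTranspose_eq_transpose_of_trivial]
  rw [Matrix.IsSymm, hq, Matrix.transpose_mul, Matrix.transpose_mul,
    Matrix.transpose_transpose, h, Matrix.mul_assoc]

end Aux

theorem stmt_15 {n d : ℕ} (L : Submodule ℝ (Matrix (Fin n) (Fin n) ℝ))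
    (hLsymm : ∀ X ∈ L, X.IsSymm)
    (hd : d ≤ n * (n + 1) / 2)
    (hdim : Module.finrank ℝ L = n * (n + 1) / 2 - d)
    (K : Set (Matrix (Fin n) (Fin n) ℝ))
    (hK : K = {X | X ∈ L ∧ X.PosSemidef})
    (X : Matrix (Fin n) (Fin n) ℝ) (hX : X ∈ K) (hX0 : X ≠ 0)
    (hExt : ∀ Y Z, Y ∈ K → Z ∈ K → X = Y + Z →
      (∃ a : ℝ, 0 ≤ a ∧ Y = a • X) ∧ (∃ b : ℝ, 0 ≤ b ∧ Z = b • X))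
    (k : ℕ) (hk : X.rank = k) :
    k * (k + 1) ≤ 2 * (d + 1) ∧
      (k : ℝ) ≤ -(1 / 2) + Real.sqrt (1 / 4 + 2 * (d + 1)) := by
  classical
  subst hK
  obtain ⟨hXL, hXpsd⟩ := hX
  have hH : X.IsHermitian := hXpsd.1
  set μ : Fin n → ℝ := hH.eigenvalues with hμdef
  have hμ0 : ∀ i, 0 ≤ μ i := fun i => hXpsd.eigenvalues_nonneg i
  set Q : Matrix (Fin n) (Fin n) ℝ := (Matrix.IsHermitian.eigenvectorUnitary hH :
    Matrix (Fin n) (Fin n) ℝ) with hQdef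
  have hQmem : Q ∈ Matrix.unitaryGroup (Fin n) ℝ :=
    (Matrix.IsHermitian.eigenvectorUnitary hH).2
  have hQ1 : Q * star Q = 1 := Matrix.mem_unitaryGroup_iff.mp hQmem
  have hQ1' : star Q * Q = 1 := Matrix.mem_unitaryGroup_iff'.mp hQmem
  set e := conjE Q hQ1 hQ1' with hedef
  have he_apply : ∀ M, e M = star Q * M * Q := fun _ => rfl
  have he_symm : ∀ M, e.symm M = Q * M * star Q := fun _ => rfl
  have hdiagX : e X = Matrix.diagonal μ := by
    rw [he_apply]
    have := hH.conjStarAlgAut_star_eigenvectorUnitary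
    simpa [Unitary.conjStarAlgAut_star_apply] using this
  -- support of the eigenvalues
  set s : Finset (Fin n) := Finset.univ.filter (fun i => μ i ≠ 0) with hsdef
  have hscard : s.card = k := by
    rw [← hk, hH.rank_eq_card_non_zero_eigs]
    rw [Fintype.card_subtype]
  set Ms := symOn n s with hMs
  set L' := L.map (e : Matrix (Fin n) (Fin n) ℝ →ₗ[ℝ] Matrix (Fin n) (Fin n) ℝ) with hL'
  have hL'rank : Module.finrank ℝ L' = n * (n + 1) / 2 - d := by
    rw [hL', LinearEquiv.finrank_map_eq]; exact hdim
  have hL'symm : L' ≤ symOn n Finset.univ := by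
    rintro Y' hY'
    obtain ⟨Z, hZ, rfl⟩ := Submodule.mem_map.mp hY'
    exact ⟨isSymm_conj (hLsymm Z hZ), fun i j h => by simp at h⟩
  have hMssub : Ms ≤ symOn n Finset.univ :=
    fun Y hY => ⟨hY.1, fun i j h => by simp at h⟩
  -- the key step: L' ⊓ Ms is contained in the span of diagonal μ
  have hinf : L' ⊓ Ms ≤ Submodule.span ℝ {Matrix.diagonal μ} := by
    rintro Y ⟨hYL', hYMs⟩
    obtain ⟨Z, hZL, hZe⟩ := Submodule.mem_map.mp hYL'
    obtain ⟨hYsym, hYsupp⟩ := hYMs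
    have hZe' : e Z = Y := hZe
    obtain ⟨t, ht0, hp1, hp2⟩ := perturb μ hμ0 Y hYsym (fun i j h => by
      apply hYsupp i j
      rcases h with h | h
      · exact Or.inl (by simp [hsdef, h])
      · exact Or.inr (by simp [hsdef, h]))
    have hXpZ : (X + t • Z).PosSemidef := by
      have heq : X + t • Z = e.symm (Matrix.diagonal μ + t • Y) := by
        apply e.injective
        rw [LinearEquiv.apply_symm_apply, map_add, _root_.map_smul, hdiagX, hZe']
      rw [heq, he_symm]
      have := hp1.mul_mul_conjTranspose_same Q
      rwa [← Matrix.star_eq_conjTranspose] at this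
    have hXmZ : (X - t • Z).PosSemidef := by
      have heq : X - t • Z = e.symm (Matrix.diagonal μ - t • Y) := by
        apply e.injective
        rw [LinearEquiv.apply_symm_apply, map_sub, _root_.map_smul, hdiagX, hZe']
      rw [heq, he_symm]
      have := hp2.mul_mul_conjTranspose_same Q
      rwa [← Matrix.star_eq_conjTranspose] at this
    have hsum : X = (2⁻¹ : ℝ) • (X + t • Z) + (2⁻¹ : ℝ) • (X - t • Z) := by module
    have hmem1 : (2⁻¹ : ℝ) • (X + t • Z) ∈ {W | W ∈ L ∧ W.PosSemidef} :=
      ⟨L.smul_mem _ (L.add_mem hXL (L.smul_mem _ hZL)), psd_smul hXpZ (by norm_num)⟩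
    have hmem2 : (2⁻¹ : ℝ) • (X - t • Z) ∈ {W | W ∈ L ∧ W.PosSemidef} :=
      ⟨L.smul_mem _ (L.sub_mem hXL (L.smul_mem _ hZL)), psd_smul hXmZ (by norm_num)⟩
    obtain ⟨⟨a, _, haX⟩, -⟩ := hExt _ _ hmem1 hmem2 hsum
    -- haX : 2⁻¹ • (X + t • Z) = a • X
    have hZX : Z = (t⁻¹ * (2 * a - 1)) • X := by
      have h1 : t • Z = (2 * a - 1) • X := by
        have h2 : ((2 : ℝ) * 2⁻¹) • (X + t • Z) = ((2 : ℝ) * a) • X := by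
          rw [← smul_smul, ← smul_smul, haX]
        rw [show ((2 : ℝ) * 2⁻¹) = 1 by norm_num, one_smul] at h2
        rw [show ((2 : ℝ) * a - 1) • X = ((2 : ℝ) * a) • X - X by module, ← h2]
        module
      calc Z = t⁻¹ • (t • Z) := by rw [smul_smul, inv_mul_cancel₀ (ne_of_gt ht0), one_smul]
        _ = (t⁻¹ * (2 * a - 1)) • X := by rw [h1, smul_smul]
    refine Submodule.mem_span_singleton.mpr ⟨t⁻¹ * (2 * a - 1), ?_⟩
    calc (t⁻¹ * (2 * a - 1)) • Matrix.diagonal μ = e ((t⁻¹ * (2 * a - 1)) • X) := by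
          rw [_root_.map_smul, hdiagX]
      _ = e Z := by rw [← hZX]
      _ = Y := hZe'
  -- dimension count
  have hfininf : Module.finrank ℝ ↥(L' ⊓ Ms) ≤ 1 := by
    refine le_trans (Submodule.finrank_mono hinf) ?_
    by_cases hD : Matrix.diagonal μ = (0 : Matrix (Fin n) (Fin n) ℝ)
    · rw [hD, Submodule.span_zero_singleton, finrank_bot]
      exact zero_le_one
    · exact le_of_eq (finrank_span_singleton hD)
  have hfinsup : Module.finrank ℝ ↥(L' ⊔ Ms) ≤ (n + 1).choose 2 := by
    have hle : L' ⊔ Ms ≤ symOn n Finset.univ := sup_le hL'symm hMssub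
    refine le_trans (Submodule.finrank_mono hle) ?_
    rw [finrank_symOn, Finset.card_univ, Fintype.card_fin]
  have hcount := Submodule.finrank_sup_add_finrank_inf_eq L' Ms
  have hMsrank : Module.finrank ℝ Ms = (k + 1).choose 2 := by
    rw [hMs, finrank_symOn, hscard]
  have hchoose_n : n * (n + 1) / 2 = (n + 1).choose 2 := by
    rw [Nat.choose_two_right, Nat.add_sub_cancel, Nat.mul_comm]
  have hchoose_k : (k + 1).choose 2 = k * (k + 1) / 2 := by
    rw [Nat.choose_two_right, Nat.add_sub_cancel, Nat.mul_comm]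
  have heven : 2 ∣ k * (k + 1) := (Nat.even_mul_succ_self k).two_dvd
  have hkk : k * (k + 1) ≤ 2 * (d + 1) := by
    rw [hL'rank] at hcount
    rw [hMsrank] at hcount
    rw [hchoose_k] at hcount
    omega
  refine ⟨hkk, ?_⟩
  have hkkR : (k : ℝ) * (k + 1) ≤ 2 * (d + 1) := by exact_mod_cast hkk
  have h1 : ((k : ℝ) + 1 / 2) ^ 2 ≤ 1 / 4 + 2 * (d + 1) := by nlinarith
  have h2 : (k : ℝ) + 1 / 2 ≤ Real.sqrt (1 / 4 + 2 * (d + 1)) := by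
    have h3 := Real.sqrt_le_sqrt h1
    rwa [Real.sqrt_sq (by positivity)] at h3
  linarith
end

section
/- Let K = L ∩ S₊ⁿ be a rank one generated spectrahedral cone and let x ∈ ℝⁿ be a nonzero vector such that x xᵀ generates an extreme ray of K which is not isolated, in the sense that there exists a sequence of vectors z_k ∈ ℝⁿ with z_k z_kᵀ ∈ K for all k, z_k not a scalar multiple of x for all k, and z_k → x. Then there exists a vector y ∈ ℝⁿ, linearly independent of x, such that x yᵀ + y xᵀ belongs to the linear span of K. -/
open Matrix

/-- `X` generates an extreme ray of the convex cone `K`. -/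
def GenExtremeRay {n : ℕ} (K : Set (Matrix (Fin n) (Fin n) ℝ))
    (X : Matrix (Fin n) (Fin n) ℝ) : Prop :=
  X ∈ K ∧ X ≠ 0 ∧ ∀ Y Z, Y ∈ K → Z ∈ K → X = Y + Z →
    (∃ a : ℝ, 0 ≤ a ∧ Y = a • X) ∧ (∃ b : ℝ, 0 ≤ b ∧ Z = b • X)

theorem stmt_18 {n : ℕ} (L : Submodule ℝ (Matrix (Fin n) (Fin n) ℝ))
    (K : Set (Matrix (Fin n) (Fin n) ℝ))
    (hK : K = {X | X ∈ L ∧ X.PosSemidef})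
    (hROG : IsROG K)
    (x : Fin n → ℝ) (hx0 : x ≠ 0)
    (hExt : GenExtremeRay K (vecMulVec x x))
    (z : ℕ → (Fin n → ℝ))
    (hzK : ∀ k, vecMulVec (z k) (z k) ∈ K)
    (hzx : ∀ k, ∀ c : ℝ, z k ≠ c • x)
    (hzlim : Filter.Tendsto z Filter.atTop (nhds x)) :
    ∃ y : Fin n → ℝ, LinearIndependent ℝ ![x, y] ∧
      vecMulVec x y + vecMulVec y x ∈ Submodule.span ℝ K := by
  classical
  have hd : (0:ℝ) < x ⬝ᵥ x := by
    have h0 : (0:ℝ) ≤ x ⬝ᵥ x := Finset.sum_nonneg fun i _ => mul_self_nonneg _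
    rcases lt_or_eq_of_le h0 with h | h
    · exact h
    · exact absurd (dotProduct_self_eq_zero.mp h.symm) hx0
  obtain ⟨c, hc_def⟩ : ∃ c : ℕ → ℝ, ∀ k, c k = (z k ⬝ᵥ x) / (x ⬝ᵥ x) := ⟨_, fun _ => rfl⟩
  obtain ⟨w, hw_def⟩ : ∃ w : ℕ → (Fin n → ℝ), ∀ k, w k = z k - c k • x := ⟨_, fun _ => rfl⟩
  have hw0 : ∀ k, w k ≠ 0 := by
    intro k h
    rw [hw_def k, sub_eq_zero] at h
    exact hzx k (c k) h
  have hwnorm : ∀ k, ‖w k‖ ≠ 0 := fun k => norm_ne_zero_iff.mpr (hw0 k)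
  obtain ⟨y', hy'_def⟩ : ∃ y' : ℕ → (Fin n → ℝ), ∀ k, y' k = ‖w k‖⁻¹ • w k := ⟨_, fun _ => rfl⟩
  have hy'norm : ∀ k, ‖y' k‖ = 1 := by
    intro k
    simp [hy'_def k, norm_smul, inv_mul_cancel₀ (hwnorm k)]
  -- dot product continuity helpers
  have hdotcont : ∀ v : Fin n → ℝ, Continuous fun u : Fin n → ℝ => u ⬝ᵥ v := by
    intro v
    exact continuous_finset_sum _ fun i _ => (continuous_apply i).mul continuous_const
  have hxw : ∀ k, x ⬝ᵥ w k = 0 := by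
    intro k
    have : x ⬝ᵥ w k = x ⬝ᵥ z k - ((z k ⬝ᵥ x) / (x ⬝ᵥ x)) * (x ⬝ᵥ x) := by
      rw [hw_def k, hc_def k]
      simp [dotProduct_sub, dotProduct_smul, smul_eq_mul]
    rw [this, div_mul_cancel₀ _ (ne_of_gt hd), dotProduct_comm, sub_self]
  -- compactness: subsequence of y' converges
  obtain ⟨y, hy_mem, φ, hφ, hyconv⟩ :=
    (isCompact_sphere (0 : Fin n → ℝ) 1).tendsto_subseq
      (fun k => by simpa [mem_sphere_zero_iff_norm] using hy'norm k)
  have hynorm : ‖y‖ = 1 := by simpa [mem_sphere_zero_iff_norm] using hy_mem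
  have hy0 : y ≠ 0 := by intro h; rw [h] at hynorm; simp at hynorm
  have hφat : Filter.Tendsto φ Filter.atTop Filter.atTop := hφ.tendsto_atTop
  -- x ⬝ᵥ y = 0
  have hxy : x ⬝ᵥ y = 0 := by
    have h1 : Filter.Tendsto (fun k => x ⬝ᵥ y' (φ k)) Filter.atTop (nhds (x ⬝ᵥ y)) := by
      have : Continuous fun u : Fin n → ℝ => x ⬝ᵥ u :=
        continuous_finset_sum _ fun i _ => continuous_const.mul (continuous_apply i)
      exact (this.tendsto y).comp hyconv
    have h2 : (fun k => x ⬝ᵥ y' (φ k)) = fun _ => (0:ℝ) := by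
      funext k
      simp [hy'_def (φ k), dotProduct_smul, hxw (φ k)]
    rw [h2] at h1
    exact (tendsto_nhds_unique tendsto_const_nhds h1).symm
  refine ⟨y, ?_, ?_⟩
  · -- linear independence
    rw [linearIndependent_fin2]
    refine ⟨hy0, fun a ha => ?_⟩
    simp only [Matrix.cons_val_one, Matrix.head_cons, Matrix.cons_val_zero] at ha
    have : x ⬝ᵥ x = a * (x ⬝ᵥ y) := by
      rw [← ha]; simp [dotProduct_comm (a • y) x, dotProduct_smul, smul_eq_mul]
    rw [hxy, mul_zero] at this
    exact absurd this (ne_of_gt hd)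
  · -- span membership via limit
    obtain ⟨M, hM_def⟩ : ∃ M : ℕ → Matrix (Fin n) (Fin n) ℝ, ∀ k,
        M k = ‖w k‖⁻¹ • (vecMulVec (z k) (z k) - (c k)^2 • vecMulVec x x) := ⟨_, fun _ => rfl⟩
    have hMspan : ∀ k, M k ∈ Submodule.span ℝ K := by
      intro k
      rw [hM_def k]
      exact Submodule.smul_mem _ _ (Submodule.sub_mem _
        (Submodule.subset_span (hzK k))
        (Submodule.smul_mem _ _ (Submodule.subset_span hExt.1)))
    have hMeq : ∀ k, M k = c k • (vecMulVec x (y' k) + vecMulVec (y' k) x)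
        + ‖w k‖ • vecMulVec (y' k) (y' k) := by
      intro k
      have hz : ∀ i, z k i = c k * x i + w k i := by
        intro i
        have h := congrFun (hw_def k) i
        simp only [Pi.sub_apply, Pi.smul_apply, smul_eq_mul] at h
        linarith
      ext i j
      rw [hM_def k]
      simp only [hy'_def k, Matrix.smul_apply, Matrix.sub_apply, Matrix.add_apply,
        vecMulVec_apply, Pi.smul_apply, smul_eq_mul, hz]
      field_simp [hwnorm k]
      ring
    -- convergence of the pieces
    have hclim : Filter.Tendsto c Filter.atTop (nhds 1) := by
      have h1 : Filter.Tendsto (fun k => z k ⬝ᵥ x) Filter.atTop (nhds (x ⬝ᵥ x)) :=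
        ((hdotcont x).tendsto x).comp hzlim
      have h2 := h1.div_const (x ⬝ᵥ x)
      rw [div_self (ne_of_gt hd)] at h2
      exact h2.congr fun k => (hc_def k).symm
    have hwlim : Filter.Tendsto w Filter.atTop (nhds 0) := by
      have h2 : Filter.Tendsto (fun k => c k • x) Filter.atTop (nhds ((1:ℝ) • x)) :=
        hclim.smul_const x
      have h3 := hzlim.sub h2
      rw [one_smul, sub_self] at h3
      exact h3.congr fun k => (hw_def k).symm
    have hnw : Filter.Tendsto (fun k => ‖w k‖) Filter.atTop (nhds 0) := by
      simpa using hwlim.norm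
    -- continuity of vecMulVec pieces
    have hvc1 : Continuous fun v : Fin n → ℝ => vecMulVec x v :=
      continuous_matrix fun i j => continuous_const.mul (continuous_apply j)
    have hvc2 : Continuous fun v : Fin n → ℝ => vecMulVec v x :=
      continuous_matrix fun i j => (continuous_apply i).mul continuous_const
    have hvc3 : Continuous fun v : Fin n → ℝ => vecMulVec v v :=
      continuous_matrix fun i j => (continuous_apply i).mul (continuous_apply j)
    have tendA : Filter.Tendsto (fun k => vecMulVec x (y' (φ k)) + vecMulVec (y' (φ k)) x)
        Filter.atTop (nhds (vecMulVec x y + vecMulVec y x)) :=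
      ((hvc1.tendsto y).comp hyconv).add ((hvc2.tendsto y).comp hyconv)
    have tendB : Filter.Tendsto (fun k => vecMulVec (y' (φ k)) (y' (φ k)))
        Filter.atTop (nhds (vecMulVec y y)) :=
      (hvc3.tendsto y).comp hyconv
    have tendM : Filter.Tendsto (fun k => M (φ k)) Filter.atTop
        (nhds (vecMulVec x y + vecMulVec y x)) := by
      have h := ((hclim.comp hφat).smul tendA).add ((hnw.comp hφat).smul tendB)
      simp only [one_smul, zero_smul, add_zero] at h
      exact h.congr fun k => (hMeq (φ k)).symm
    have hclosed : IsClosed ((Submodule.span ℝ K :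
        Submodule ℝ (Matrix (Fin n) (Fin n) ℝ)) : Set (Matrix (Fin n) (Fin n) ℝ)) :=
      (Submodule.span ℝ K).closed_of_finiteDimensional
    exact hclosed.mem_of_tendsto tendM
      (Filter.Eventually.of_forall fun k => hMspan (φ k))
end
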